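/- arXiv:1603.03978 — 12 statements merged into one kernel-verified Lean document; each statement's English description precedes it below -/
import Mathlib

section
/- For any positive integer k, the Davenport constant of the interval I_k = {i ∈ ℤ : -k ≤ i ≤ k}, i.e. the maximum length of a nonempty zero-sum multiset over I_k having no proper nonempty zero-sum sub-multiset, equals max(2, 2k-1). -/
namespace DavAux

def pref (l : List ℤ) (i : ℕ) : ℤ := (l.take i).sum

lemma seg_eq (l : List ℤ) {i j : ℕ} (hij : i ≤ j) :
    pref l j = pref l i + ((l.drop i).take (j - i)).sum := by
  unfold pref
  rw [← List.sum_append, ← List.take_add, Nat.add_sub_cancel' hij]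

lemma seg_sublist (l : List ℤ) (i m : ℕ) : ((l.drop i).take m).Sublist l :=
  (List.take_sublist _ _).trans (List.drop_sublist _ _)

lemma seg_le (l : List ℤ) (i m : ℕ) :
    (((l.drop i).take m : List ℤ) : Multiset ℤ) ≤ (l : Multiset ℤ) :=
  Multiset.coe_le.mpr (seg_sublist l i m).subperm

lemma pref_mono {l : List ℤ} (hl : ∀ x ∈ l, 1 ≤ x) {i j : ℕ} (hij : i ≤ j) :
    pref l i ≤ pref l j := by
  rw [seg_eq l hij]
  have : 0 ≤ ((l.drop i).take (j - i)).sum :=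
    List.sum_nonneg (fun x hx => by
      have := hl x ((seg_sublist l i (j-i)).subset hx); omega)
  omega

lemma pref_lt {l : List ℤ} (hl : ∀ x ∈ l, 1 ≤ x) {i j : ℕ} (hij : i < j)
    (hj : j ≤ l.length) : pref l i < pref l j := by
  rw [seg_eq l hij.le]
  have hne : (l.drop i).take (j - i) ≠ [] := by
    have : ((l.drop i).take (j - i)).length = min (j-i) (l.length - i) := by
      simp [List.length_take, List.length_drop]
    intro h
    rw [h] at this
    simp at this
    omega
  have : 0 < ((l.drop i).take (j - i)).sum :=
    List.sum_pos _ (fun x hx => by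
      have := hl x ((seg_sublist l i (j-i)).subset hx); omega) hne
  omega

lemma core (m : ℤ) (hm : 0 ≤ m) (lp ln : List ℤ)
    (hp : ∀ x ∈ lp, 1 ≤ x ∧ x ≤ m) (hn : ∀ x ∈ ln, 1 ≤ x)
    (hs : lp.sum = ln.sum)
    (hmin : ∀ A B : Multiset ℤ, A ≤ (lp : Multiset ℤ) → B ≤ (ln : Multiset ℤ) →
      A.sum = B.sum → B ≠ 0 → B = (ln : Multiset ℤ)) :
    (ln.length : ℤ) ≤ m := by
  classical
  set q := ln.length with hq
  rcases Nat.eq_zero_or_pos q with h0 | hqpos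
  · rw [h0]; simpa using hm
  have hplen : pref lp lp.length = ln.sum := by unfold pref; rw [List.take_length, hs]
  have hnlen : pref ln q = ln.sum := by unfold pref; rw [hq, List.take_length]
  have hp1 : ∀ x ∈ lp, 1 ≤ x := fun x hx => (hp x hx).1
  have hkey : ∀ j : ℕ, ∃ i, j < q → 0 < i ∧ i ≤ lp.length ∧ pref ln j < pref lp i ∧
      pref lp (i-1) ≤ pref ln j ∧ ∀ i', pref ln j < pref lp i' → i ≤ i' := by
    intro j
    by_cases hj : j < q
    · have hexj : ∃ i, pref ln j < pref lp i := by
        refine ⟨lp.length, ?_⟩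
        have h1 : pref ln j < pref ln q := pref_lt hn hj le_rfl
        omega
      refine ⟨Nat.find hexj, fun _ => ?_⟩
      have hspec := Nat.find_spec hexj
      have hpos : 0 < Nat.find hexj := by
        rcases Nat.eq_zero_or_pos (Nat.find hexj) with h | h
        · exfalso
          rw [h] at hspec
          have h2 : pref ln 0 ≤ pref ln j := pref_mono hn (Nat.zero_le _)
          unfold pref at hspec h2
          simp at hspec h2
          omega
        · exact h
      refine ⟨hpos, ?_, hspec, ?_, fun i' hi' => Nat.find_min' hexj hi'⟩
      · apply Nat.find_min' hexj
        have h1 : pref ln j < pref ln q := pref_lt hn hj le_rfl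
        omega
      · have := Nat.find_min hexj (show Nat.find hexj - 1 < Nat.find hexj by omega)
        omega
    · exact ⟨0, fun h => absurd h hj⟩
  choose I hIfull using hkey
  set g : ℕ → ℤ := fun j => pref lp (I j) - pref ln j with hg
  have hIpos : ∀ j < q, 0 < I j := fun j hj => (hIfull j hj).1
  have hIle : ∀ j < q, I j ≤ lp.length := fun j hj => (hIfull j hj).2.1
  have hspec : ∀ j < q, pref ln j < pref lp (I j) := fun j hj => (hIfull j hj).2.2.1
  have hIpred : ∀ j < q, pref lp (I j - 1) ≤ pref ln j := fun j hj => (hIfull j hj).2.2.2.1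
  have hglb : ∀ j < q, 1 ≤ g j := by
    intro j hj
    have := hspec j hj
    simp only [hg]
    omega
  have hgub : ∀ j < q, g j ≤ m := by
    intro j hj
    have h1 := hIpred j hj
    have h2 : I j - 1 ≤ I j := Nat.sub_le _ _
    have h3 := seg_eq lp h2
    have hlen1 : ((lp.drop (I j - 1)).take (I j - (I j - 1))).length = 1 := by
      have hpos := hIpos j hj
      have hle := hIle j hj
      rw [List.length_take, List.length_drop]
      omega
    obtain ⟨x, hx⟩ := List.length_eq_one_iff.mp hlen1
    have hxmem : x ∈ lp := (seg_sublist lp _ _).subset (by rw [hx]; simp)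
    have hxle := (hp x hxmem).2
    rw [hx] at h3
    simp at h3
    simp only [hg]
    omega
  -- injectivity
  have haux : ∀ j j', j < j' → j' < q → g j = g j' → False := by
    intro j j' hjj hj' hgg
    have hj : j < q := lt_trans hjj hj'
    have hII : I j ≤ I j' := by
      apply (hIfull j hj).2.2.2.2
      have h1 : pref ln j ≤ pref ln j' := pref_mono hn hjj.le
      have h2 := hspec j' hj'
      omega
    set A : Multiset ℤ := (↑((lp.drop (I j)).take (I j' - I j)) : Multiset ℤ) with hA
    set B : Multiset ℤ := (↑((ln.drop j).take (j' - j)) : Multiset ℤ) with hB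
    have hAsum : A.sum = pref lp (I j') - pref lp (I j) := by
      have := seg_eq lp hII
      simp only [hA, Multiset.sum_coe]
      omega
    have hBsum : B.sum = pref ln j' - pref ln j := by
      have := seg_eq ln hjj.le
      simp only [hB, Multiset.sum_coe]
      omega
    have hABsum : A.sum = B.sum := by
      simp only [hg] at hgg
      omega
    have hBcard : B.card = j' - j := by
      simp only [hB, Multiset.coe_card, List.length_take, List.length_drop]
      omega
    have hBne : B ≠ 0 := by
      rw [← Multiset.card_pos, hBcard]
      omega
    have hBeq := hmin A B (seg_le lp _ _) (seg_le ln _ _) hABsum hBne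
    have : B.card = j' - j := hBcard
    rw [hBeq] at this
    simp only [Multiset.coe_card] at this
    omega
  have hmaps : ∀ j ∈ Finset.range q, g j ∈ Finset.Icc (1:ℤ) m := by
    intro j hj
    rw [Finset.mem_range] at hj
    rw [Finset.mem_Icc]
    exact ⟨hglb j hj, hgub j hj⟩
  have hinj : Set.InjOn g (Finset.range q) := by
    intro a ha b hb hab
    simp only [Finset.coe_range, Set.mem_Iio] at ha hb
    by_contra hne
    rcases lt_or_gt_of_ne hne with h | h
    · exact haux a b h hb hab
    · exact haux b a h ha hab.symm
  have hcard := Finset.card_le_card_of_injOn g hmaps hinj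
  rw [Finset.card_range, Int.card_Icc] at hcard
  omega


-- the witness for k ≥ 2
lemma mem_case_big (k : ℕ) (hk : 2 ≤ k) :
    ∃ S : Multiset ℤ,
      (∀ x ∈ S, -(k : ℤ) ≤ x ∧ x ≤ (k : ℤ)) ∧ S ≠ 0 ∧ S.sum = 0 ∧
      (∀ T : Multiset ℤ, T ≤ S → T ≠ 0 → T ≠ S → T.sum ≠ 0) ∧
      S.card = 2 * k - 1 := by
  classical
  set a : ℤ := -(k:ℤ) with ha
  set b : ℤ := (k:ℤ) - 1 with hb
  have hab : a ≠ b := by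
    simp only [ha, hb]
    have : (1:ℤ) ≤ (k:ℤ) := by exact_mod_cast hk.trans' (by norm_num)
    omega
  set S : Multiset ℤ := Multiset.replicate (k-1) a + Multiset.replicate k b with hS
  have hca : S.count a = k - 1 := by
    simp [hS, Multiset.count_replicate, hab, Ne.symm hab]
  have hcb : S.count b = k := by
    simp [hS, Multiset.count_replicate, hab, Ne.symm hab]
  have hcother : ∀ x : ℤ, x ≠ a → x ≠ b → S.count x = 0 := by
    intro x hxa hxb
    rw [hS]
    simp only [Multiset.count_add, Multiset.count_replicate]
    rw [if_neg (fun h => hxa h.symm), if_neg (fun h => hxb h.symm)]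
  refine ⟨S, ?_, ?_, ?_, ?_, ?_⟩
  · intro x hx
    simp only [hS, Multiset.mem_add, Multiset.mem_replicate] at hx
    have hk1 : (1:ℤ) ≤ (k:ℤ) := by exact_mod_cast Nat.one_le_iff_ne_zero.mpr (by omega)
    rcases hx with ⟨_, rfl⟩ | ⟨_, rfl⟩ <;> simp only [ha, hb] <;> omega
  · intro h
    have : S.card = 0 := by rw [h]; simp
    rw [hS] at this
    simp [Multiset.card_replicate] at this
    omega
  · rw [hS]
    simp only [Multiset.sum_add, Multiset.sum_replicate, nsmul_eq_mul]
    have hkc : ((k-1 : ℕ) : ℤ) = (k:ℤ) - 1 := by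
      have : 1 ≤ k := by omega
      push_cast [this]
      ring
    rw [hkc, ha, hb]
    ring
  · intro T hT hT0 hTS
    set α : ℕ := T.count a with hα
    set β : ℕ := T.count b with hβ
    have hαle : α ≤ k - 1 := by rw [hα, ← hca]; exact Multiset.count_le_of_le a hT
    have hβle : β ≤ k := by rw [hβ, ← hcb]; exact Multiset.count_le_of_le b hT
    have hTeq : T = Multiset.replicate α a + Multiset.replicate β b := by
      ext x
      by_cases hxa : x = a
      · subst hxa
        simp [Multiset.count_replicate, hab, Ne.symm hab, hα]
      · by_cases hxb : x = b
        · subst hxb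
          simp [Multiset.count_replicate, hab, Ne.symm hab, hβ]
        · have h1 : T.count x ≤ S.count x := Multiset.count_le_of_le x hT
          rw [hcother x hxa hxb] at h1
          simp only [Multiset.count_add, Multiset.count_replicate]
          rw [if_neg (fun h => hxa h.symm), if_neg (fun h => hxb h.symm)]
          omega
    have hTsum : T.sum = (α : ℤ) * a + (β : ℤ) * b := by
      rw [hTeq]
      simp [Multiset.sum_replicate, nsmul_eq_mul]
    intro hzero
    rw [hTsum, ha, hb] at hzero
    have hkz : (1:ℤ) ≤ (k:ℤ) := by exact_mod_cast Nat.one_le_iff_ne_zero.mpr (by omega)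
    have hb0 : (β:ℤ) = ((β:ℤ) - (α:ℤ)) * (k:ℤ) := by linear_combination -hzero
    rcases le_or_gt ((β:ℤ) - (α:ℤ)) 0 with h | h
    · have hβ0 : (β:ℤ) ≤ 0 := by nlinarith
      have hβ0' : β = 0 := by exact_mod_cast le_antisymm hβ0 (by positivity)
      have hα0 : α = 0 := by
        rw [hβ0'] at hzero
        simp at hzero
        rcases hzero with h' | h'
        · exact_mod_cast h'
        · omega
      apply hT0
      rw [hTeq, hβ0', hα0]
      simp
    · have h1 : (1:ℤ) ≤ (β:ℤ) - (α:ℤ) := h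
      have hβk : (k:ℤ) ≤ (β:ℤ) := by nlinarith
      have hβk' : β = k := by
        have : (β:ℤ) = (k:ℤ) := le_antisymm (by exact_mod_cast hβle) hβk
        exact_mod_cast this
      have hαk : α = k - 1 := by
        rw [hβk'] at hb0
        have h2 : ((k:ℤ) - (α:ℤ)) * (k:ℤ) = 1 * (k:ℤ) := by linarith [hb0]
        have h3 : (k:ℤ) - (α:ℤ) = 1 := by
          have hk0 : (k:ℤ) ≠ 0 := by positivity
          exact mul_right_cancel₀ hk0 h2
        omega
      apply hTS
      rw [hTeq, hβk', hαk, hS]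
  · rw [hS]
    simp only [Multiset.card_add, Multiset.card_replicate]
    omega

lemma mem_case_one :
    ∃ S : Multiset ℤ,
      (∀ x ∈ S, -(1 : ℤ) ≤ x ∧ x ≤ (1 : ℤ)) ∧ S ≠ 0 ∧ S.sum = 0 ∧
      (∀ T : Multiset ℤ, T ≤ S → T ≠ 0 → T ≠ S → T.sum ≠ 0) ∧
      S.card = 2 := by
  refine ⟨{1, -1}, ?_, by decide, by decide, ?_, by decide⟩
  · intro x hx
    rcases Multiset.mem_cons.mp hx with rfl | hx
    · omega
    · rcases Multiset.mem_singleton.mp hx with rfl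
      omega
  · intro T hT hT0 hTS
    have hc : T.card ≤ 2 := by
      have := Multiset.card_le_card hT
      simpa using this
    have hc1 : T.card ≠ 0 := by
      intro h
      exact hT0 (Multiset.card_eq_zero.mp h)
    have hc2 : T.card ≠ 2 := by
      intro h
      exact hTS (Multiset.eq_of_le_of_card_le hT (by simp [h]))
    have : T.card = 1 := by omega
    obtain ⟨x, rfl⟩ := Multiset.card_eq_one.mp this
    have hx : x ∈ ({1, -1} : Multiset ℤ) :=
      Multiset.mem_of_le hT (Multiset.mem_singleton_self x)
    simp only [Multiset.sum_singleton]
    rcases Multiset.mem_cons.mp hx with rfl | hx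
    · norm_num
    · rcases Multiset.mem_singleton.mp hx with rfl
      norm_num

lemma upper (k : ℕ) (hk : 1 ≤ k) (n : ℕ) (S : Multiset ℤ)
    (hbd : ∀ x ∈ S, -(k : ℤ) ≤ x ∧ x ≤ (k : ℤ)) (hne : S ≠ 0) (hsum : S.sum = 0)
    (hmin : ∀ T : Multiset ℤ, T ≤ S → T ≠ 0 → T ≠ S → T.sum ≠ 0)
    (hcard : S.card = n) : n ≤ max 2 (2 * k - 1) := by
  classical
  by_cases h0 : (0:ℤ) ∈ S
  · -- S must be {0}
    have hT : ({0} : Multiset ℤ) ≤ S := Multiset.singleton_le.mpr h0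
    by_cases hS0 : S = {0}
    · have : n = 1 := by rw [← hcard, hS0]; rfl
      omega
    · exact absurd rfl (hmin {0} hT (by simp) (fun h => hS0 h.symm))
  · -- split into positive and negative parts
    set P : Multiset ℤ := S.filter (fun x => 0 < x) with hP
    set N : Multiset ℤ := S.filter (fun x => x < 0) with hN
    have hPN : P + N = S := by
      rw [hP, hN]
      rw [show (S.filter (fun x => x < 0)) = S.filter (fun x => ¬ 0 < x) from ?_]
      · exact Multiset.filter_add_not _ S
      · apply Multiset.filter_congr
        intro x hx
        constructor
        · intro h; omega
        · intro h
          rcases lt_or_eq_of_le (not_lt.mp h) with h' | h'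
          · exact h'
          · exact absurd (h' ▸ hx) h0
    set N' : Multiset ℤ := N.map Neg.neg with hN'
    have hNN' : N'.map Neg.neg = N := by
      rw [hN', Multiset.map_map]
      simp
    have hPsum : P.sum + N.sum = 0 := by
      rw [← Multiset.sum_add, hPN, hsum]
    have hN'sum : N'.sum = -N.sum := by
      rw [hN']
      exact Multiset.sum_map_neg' N
    have hPpos : ∀ x ∈ P, 1 ≤ x ∧ x ≤ (k:ℤ) := by
      intro x hx
      rw [hP, Multiset.mem_filter] at hx
      exact ⟨hx.2, (hbd x hx.1).2⟩
    have hN'pos : ∀ x ∈ N', 1 ≤ x ∧ x ≤ (k:ℤ) := by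
      intro x hx
      rw [hN', Multiset.mem_map] at hx
      obtain ⟨y, hy, rfl⟩ := hx
      rw [hN, Multiset.mem_filter] at hy
      have := (hbd y hy.1).1
      have := hy.2
      constructor <;> omega
    -- the key claim from minimality
    have hclaim : ∀ A B' : Multiset ℤ, A ≤ P → B' ≤ N → A.sum + B'.sum = 0 →
        (A ≠ 0 ∨ B' ≠ 0) → A = P ∧ B' = N := by
      intro A B' hA hB' hsum0 hne0
      set T : Multiset ℤ := A + B' with hT
      have hTS : T ≤ S := by rw [← hPN]; exact add_le_add hA hB'
      have hT0 : T ≠ 0 := by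
        intro h
        have hc : Multiset.card A + Multiset.card B' = 0 := by
          rw [← Multiset.card_add, ← hT, h, Multiset.card_zero]
        rcases hne0 with h' | h'
        · exact h' (Multiset.card_eq_zero.mp (by omega))
        · exact h' (Multiset.card_eq_zero.mp (by omega))
      have hTsum : T.sum = 0 := by rw [hT, Multiset.sum_add, hsum0]
      have hTSeq : T = S := by
        by_contra h
        exact hmin T hTS hT0 h hTsum
      have hcA : A.card ≤ P.card := Multiset.card_le_card hA
      have hcB : B'.card ≤ N.card := Multiset.card_le_card hB'
      have hcT : A.card + B'.card = P.card + N.card := by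
        rw [← Multiset.card_add, ← Multiset.card_add, hPN, ← hT, hTSeq]
      constructor
      · exact Multiset.eq_of_le_of_card_le hA (by omega)
      · exact Multiset.eq_of_le_of_card_le hB' (by omega)
    -- minimality in the (positives, abs-negatives) orientation
    have hmin1 : ∀ A B : Multiset ℤ, A ≤ P → B ≤ N' → A.sum = B.sum → B ≠ 0 → B = N' := by
      intro A B hA hB hs hB0
      have hB'le : B.map Neg.neg ≤ N := by
        rw [← hNN']
        exact Multiset.map_le_map hB
      have hBsum : (B.map Neg.neg).sum = -B.sum := Multiset.sum_map_neg' B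
      have := (hclaim A (B.map Neg.neg) hA hB'le (by rw [hBsum]; omega)
        (Or.inr (by simp [hB0]))).2
      have h2 : (B.map Neg.neg).map Neg.neg = N.map Neg.neg := by rw [this]
      rw [Multiset.map_map] at h2
      simpa using h2
    have hmin2 : ∀ A B : Multiset ℤ, A ≤ N' → B ≤ P → A.sum = B.sum → B ≠ 0 → B = P := by
      intro A B hA hB hs hB0
      have hA'le : A.map Neg.neg ≤ N := by
        rw [← hNN']
        exact Multiset.map_le_map hA
      have hAsum : (A.map Neg.neg).sum = -A.sum := Multiset.sum_map_neg' A
      exact (hclaim B (A.map Neg.neg) hB hA'le (by rw [hAsum]; omega)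
        (Or.inl hB0)).1
    -- apply the core lemma
    have happq : ∀ m : ℤ, 0 ≤ m → (∀ x ∈ P, 1 ≤ x ∧ x ≤ m) → (N.card : ℤ) ≤ m := by
      intro m hm hpm
      have h := core m hm P.toList N'.toList
        (fun x hx => hpm x (by rwa [Multiset.mem_toList] at hx))
        (fun x hx => (hN'pos x (by rwa [Multiset.mem_toList] at hx)).1)
        (by rw [Multiset.sum_toList, Multiset.sum_toList]; omega)
        (fun A B hA hB hs hB0 => by
          rw [Multiset.coe_toList] at hA hB ⊢
          exact hmin1 A B hA hB hs hB0)
      rw [Multiset.length_toList] at h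
      have : N'.card = N.card := by rw [hN', Multiset.card_map]
      omega
    have happp : ∀ m : ℤ, 0 ≤ m → (∀ x ∈ N', 1 ≤ x ∧ x ≤ m) → (P.card : ℤ) ≤ m := by
      intro m hm hpm
      have h := core m hm N'.toList P.toList
        (fun x hx => hpm x (by rwa [Multiset.mem_toList] at hx))
        (fun x hx => (hPpos x (by rwa [Multiset.mem_toList] at hx)).1)
        (by rw [Multiset.sum_toList, Multiset.sum_toList]; omega)
        (fun A B hA hB hs hB0 => by
          rw [Multiset.coe_toList] at hA hB ⊢
          exact hmin2 A B hA hB hs hB0)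
      rwa [Multiset.length_toList] at h
    have hq : (N.card : ℤ) ≤ (k:ℤ) := happq k (by positivity) hPpos
    have hp : (P.card : ℤ) ≤ (k:ℤ) := happp k (by positivity) hN'pos
    have hn : P.card + N.card = n := by rw [← Multiset.card_add, hPN, hcard]
    rcases Nat.lt_or_ge n (2*k) with h2k | h2k
    · omega
    · by_cases hk2' : k < 2
      · omega
      have hk2 : 2 ≤ k := by omega
      exfalso
      have hPk : P.card = k := by omega
      have hNk : N.card = k := by omega
      have hkP : (k:ℤ) ∈ P := by
        by_contra hkP
        have := happq ((k:ℤ) - 1) (by linarith [show (1:ℤ) ≤ (k:ℤ) from by exact_mod_cast hk]) ?_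
        · omega
        · intro x hx
          refine ⟨(hPpos x hx).1, ?_⟩
          have h1 := (hPpos x hx).2
          have : x ≠ (k:ℤ) := fun h => hkP (h ▸ hx)
          omega
      have hkN : -(k:ℤ) ∈ S := by
        by_contra hkN
        have := happp ((k:ℤ) - 1) (by linarith [show (1:ℤ) ≤ (k:ℤ) from by exact_mod_cast hk]) ?_
        · omega
        · intro x hx
          refine ⟨(hN'pos x hx).1, ?_⟩
          have h1 := (hN'pos x hx).2
          have : x ≠ (k:ℤ) := by
            intro h
            subst h
            rw [hN', Multiset.mem_map] at hx
            obtain ⟨y, hy, hyx⟩ := hx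
            have : y = -(k:ℤ) := by omega
            rw [hN, Multiset.mem_filter] at hy
            exact hkN (this ▸ hy.1)
          omega
      have hkS : (k:ℤ) ∈ S := by
        rw [← hPN]
        exact Multiset.mem_add.mpr (Or.inl hkP)
      -- T = {k, -k}
      set T : Multiset ℤ := (k:ℤ) ::ₘ {-(k:ℤ)} with hT
      have hTle : T ≤ S := by
        rw [Multiset.le_iff_count]
        intro a
        by_cases ha : a = (k:ℤ)
        · subst ha
          have : T.count (k:ℤ) = 1 := by
            rw [hT]
            simp [Multiset.count_cons, Multiset.count_singleton]
            intro h
            have : (k:ℤ) ≥ 1 := by exact_mod_cast hk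
            omega
          rw [this]
          exact Multiset.one_le_count_iff_mem.mpr hkS
        · by_cases ha' : a = -(k:ℤ)
          · subst ha'
            have : T.count (-(k:ℤ)) = 1 := by
              rw [hT]
              simp [Multiset.count_cons, Multiset.count_singleton]
              intro h
              have : (k:ℤ) ≥ 1 := by exact_mod_cast hk
              omega
            rw [this]
            exact Multiset.one_le_count_iff_mem.mpr hkN
          · have : T.count a = 0 := by
              rw [hT]
              simp [Multiset.count_cons, Multiset.count_singleton, ha, ha']
            rw [this]
            exact Nat.zero_le _
      have hT0 : T ≠ 0 := by rw [hT]; simp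
      have hTS : T ≠ S := by
        intro h
        have : T.card = S.card := by rw [h]
        rw [hT, hcard] at this
        simp at this
        omega
      have hTsum : T.sum = 0 := by rw [hT]; simp
      exact hmin T hTle hT0 hTS hTsum
end DavAux

theorem davenport_interval (k : ℕ) (hk : 1 ≤ k) :
    IsGreatest {n : ℕ | ∃ S : Multiset ℤ,
      (∀ x ∈ S, -(k : ℤ) ≤ x ∧ x ≤ (k : ℤ)) ∧ S ≠ 0 ∧ S.sum = 0 ∧
      (∀ T : Multiset ℤ, T ≤ S → T ≠ 0 → T ≠ S → T.sum ≠ 0) ∧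
      S.card = n} (max 2 (2 * k - 1)) := by
  constructor
  · rcases Nat.lt_or_ge k 2 with h | h
    · have hk1 : k = 1 := by omega
      subst hk1
      have : max 2 (2 * 1 - 1) = 2 := by norm_num
      rw [this]
      exact DavAux.mem_case_one
    · have : max 2 (2 * k - 1) = 2 * k - 1 := Nat.max_eq_right (by omega)
      rw [this]
      exact DavAux.mem_case_big k h
  · intro n hn
    obtain ⟨S, hbd, hne, hsum, hmin, hcard⟩ := hn
    exact DavAux.upper k hk n S hbd hne hsum hmin hcard
end

section
/- Let k and t be positive integers such that (k+1) divides t and k divides t. Then there exists a zero-sum multiset over I_k = {-k, …, k} of length t + k(k-1) - 1 that contains no zero-sum sub-multiset of length t. Concretely, the multiset consisting of (t/(k+1) - 1) copies of the block {k, -1, -1, …, -1} (one k and k copies of -1) together with k copies of the block {k-1, -1, …, -1} (one k-1 and k-1 copies of -1) has this property. -/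
lemma tri_count (T : Multiset ℤ) (a b c : ℤ)
    (hab : a ≠ b) (hac : a ≠ c) (hbc : b ≠ c)
    (hmem : ∀ x ∈ T, x = a ∨ x = b ∨ x = c) :
    T.sum = T.count a * a + T.count b * b + T.count c * c ∧
    T.card = T.count a + T.count b + T.count c := by
  induction T using Multiset.induction with
  | empty => simp
  | cons d T ih =>
    have hd := hmem d (by simp)
    have hT' : ∀ x ∈ T, x = a ∨ x = b ∨ x = c := fun x hx => hmem x (by simp [hx])
    obtain ⟨ih1, ih2⟩ := ih hT'
    rcases hd with rfl | rfl | rfl <;>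
      refine ⟨?_, ?_⟩ <;>
      simp [Multiset.count_cons, hab, hac, hbc, hab.symm, hac.symm, hbc.symm, ih1, ih2] <;>
      push_cast <;> ring

theorem lower_bound_construction (k t : ℕ) (hk : 1 ≤ k) (ht : 0 < t)
    (h1 : (k + 1) ∣ t) (h2 : k ∣ t) :
    ∃ S : Multiset ℤ,
      S = (t / (k + 1) - 1) • ((k : ℤ) ::ₘ Multiset.replicate k (-1 : ℤ))
          + k • (((k : ℤ) - 1) ::ₘ Multiset.replicate (k - 1) (-1 : ℤ)) ∧
      (∀ x ∈ S, -(k : ℤ) ≤ x ∧ x ≤ (k : ℤ)) ∧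
      S.sum = 0 ∧
      S.card = t + k * (k - 1) - 1 ∧
      ∀ T : Multiset ℤ, T ≤ S → T.card = t → T.sum ≠ 0 := by
  obtain ⟨q, hq⟩ := h1
  have hq1 : 1 ≤ q := by nlinarith
  have ha : t / (k + 1) - 1 = q - 1 := by
    rw [hq, Nat.mul_div_cancel_left _ (by omega)]
  have hk1 : (k : ℤ) ≠ -1 := by push_cast; omega
  have hk2 : (k : ℤ) ≠ (k : ℤ) - 1 := by omega
  have hk3 : (k : ℤ) - 1 ≠ -1 := by push_cast; omega
  refine ⟨_, rfl, ?_, ?_, ?_, ?_⟩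
  · intro x hx
    simp only [Multiset.mem_add, Multiset.mem_nsmul, Multiset.mem_cons,
      Multiset.mem_replicate] at hx
    rcases hx with ⟨-, rfl | ⟨-, rfl⟩⟩ | ⟨-, rfl | ⟨-, rfl⟩⟩ <;>
      constructor <;> push_cast <;> omega
  · rw [Multiset.sum_add]
    simp only [Multiset.sum_nsmul, Multiset.sum_cons, Multiset.sum_replicate,
      smul_eq_mul, nsmul_eq_mul]
    push_cast [Nat.cast_sub hk]
    ring
  · simp only [Multiset.card_add, Multiset.card_nsmul, Multiset.card_cons,
      Multiset.card_replicate]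
    rw [ha, hq]
    zify [hq1, hk, show 1 ≤ (k + 1) * q + k * (k - 1) by nlinarith]
    push_cast [hk]
    ring
  · intro T hT hcard hsum
    have hmem : ∀ u ∈ T, u = (k : ℤ) ∨ u = (k : ℤ) - 1 ∨ u = -1 := by
      intro u hu
      have := Multiset.mem_of_le hT hu
      simp only [Multiset.mem_add, Multiset.mem_nsmul, Multiset.mem_cons,
        Multiset.mem_replicate] at this
      tauto
    obtain ⟨hsumeq, hcardeq⟩ := tri_count T (k : ℤ) ((k : ℤ) - 1) (-1) hk2 hk1 hk3 hmem
    set x := T.count (k : ℤ) with hx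
    set y := T.count ((k : ℤ) - 1) with hy
    set z := T.count (-1 : ℤ) with hz
    have hxle : x ≤ q - 1 := by
      have := Multiset.count_le_of_le (k : ℤ) hT
      simpa [Multiset.count_nsmul, Multiset.count_cons, Multiset.count_replicate,
        hk1, hk2, hk3, ha, ← hx] using this
    have hyle : y ≤ k := by
      have := Multiset.count_le_of_le ((k : ℤ) - 1) hT
      simpa [Multiset.count_nsmul, Multiset.count_cons, Multiset.count_replicate,
        hk1, hk2.symm, hk3, Ne.symm hk3, ← hy] using this
    have hcardZ : (x : ℤ) + y + z = t := by
      have : ((x + y + z : ℕ) : ℤ) = (t : ℤ) := by rw [← hcardeq, hcard]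
      push_cast at this
      linarith
    have hsZ : (x : ℤ) * k + y * ((k : ℤ) - 1) + z * (-1) = 0 := by
      rw [← hsumeq]; exact hsum
    have key : (x : ℤ) * (k + 1) + y * k = t := by linear_combination hsZ + hcardZ
    have keyN : x * (k + 1) + y * k = t := by exact_mod_cast key
    have hdvd : (k + 1) ∣ y * k :=
      (Nat.dvd_add_right (dvd_mul_left (k + 1) x)).mp (by rw [keyN]; exact ⟨q, hq⟩)
    have hcop : Nat.Coprime (k + 1) k := by
      simp [Nat.add_comm, Nat.coprime_add_self_left]
    have hy0 : y = 0 :=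
      Nat.eq_zero_of_dvd_of_lt (hcop.dvd_of_dvd_mul_right hdvd) (by omega)
    have hx' : x * (k + 1) = q * (k + 1) :=
      calc x * (k + 1) = x * (k + 1) + y * k := by rw [hy0]; ring
        _ = t := keyN
        _ = q * (k + 1) := by rw [hq]; ring
    have hxq : x = q := Nat.eq_of_mul_eq_mul_right (by omega) hx'
    omega
end

section
/- Let c ≥ 2 be an integer. The multiset S consisting of c-1 copies of c and c copies of -(c-1) is zero-sum of length 2c-1, and for every positive integer x, every zero-sum sub-multiset of S^[x] has length divisible by 2c-1. Consequently, for any t not divisible by 2c-1, there exist arbitrarily long zero-sum multisets over {-(c), …, c} containing no zero-sum sub-multiset of length t. -/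
theorem odd_block_obstruction (c : ℕ) (hc : 2 ≤ c) :
    (Multiset.replicate (c - 1) (c : ℤ)
      + Multiset.replicate c (1 - (c : ℤ))).sum = 0 ∧
    (Multiset.replicate (c - 1) (c : ℤ)
      + Multiset.replicate c (1 - (c : ℤ))).card = 2 * c - 1 ∧
    (∀ x : ℕ, 0 < x →
      ∀ T : Multiset ℤ,
        T ≤ x • (Multiset.replicate (c - 1) (c : ℤ)
                  + Multiset.replicate c (1 - (c : ℤ))) →
        T.sum = 0 → (2 * c - 1) ∣ T.card) ∧
    (∀ t : ℕ, ¬ (2 * c - 1) ∣ t →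
      ∀ N : ℕ, ∃ U : Multiset ℤ,
        (∀ y ∈ U, -(c : ℤ) ≤ y ∧ y ≤ (c : ℤ)) ∧
        U.sum = 0 ∧ N ≤ U.card ∧
        ∀ T : Multiset ℤ, T ≤ U → T.card = t → T.sum ≠ 0) := by
  set S : Multiset ℤ := Multiset.replicate (c - 1) (c : ℤ)
      + Multiset.replicate c (1 - (c : ℤ)) with hS
  have hc1 : ((c - 1 : ℕ) : ℤ) = (c : ℤ) - 1 := by
    have : (1:ℕ) ≤ c := by omega
    push_cast [this]; ring
  have hsum : S.sum = 0 := by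
    simp [hS, Multiset.sum_replicate, hc1]
    ring
  have hcard : S.card = 2 * c - 1 := by
    simp [hS]; omega
  have hne : (c : ℤ) ≠ 1 - (c : ℤ) := by
    have : (2:ℤ) ≤ (c:ℤ) := by exact_mod_cast hc
    intro h; linarith
  have key : ∀ T : Multiset ℤ, (∀ y ∈ T, y = (c:ℤ) ∨ y = 1 - (c:ℤ)) →
      T.sum = 0 → (2 * c - 1) ∣ T.card := by
    intro T hmem hTsum
    set a := T.count (c : ℤ) with ha
    set b := T.count (1 - (c:ℤ)) with hb
    have hTeq : T = Multiset.replicate a (c:ℤ) + Multiset.replicate b (1 - (c:ℤ)) := by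
      ext z
      simp only [Multiset.count_add, Multiset.count_replicate]
      by_cases h1 : z = (c:ℤ)
      · subst h1; rw [if_pos rfl, if_neg (Ne.symm hne)]; omega
      · by_cases h2 : z = 1 - (c:ℤ)
        · subst h2; rw [if_neg hne, if_pos rfl]; omega
        · have hz : z ∉ T := fun hz => by rcases hmem z hz with h | h <;> [exact h1 h; exact h2 h]
          rw [Multiset.count_eq_zero_of_notMem hz, if_neg (fun h : (c:ℤ) = z => h1 h.symm),
            if_neg (fun h : 1 - (c:ℤ) = z => h2 h.symm)]
    have hsum' : (a : ℤ) * c + (b : ℤ) * (1 - (c:ℤ)) = 0 := by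
      have := hTsum
      rw [hTeq] at this
      simpa [Multiset.sum_replicate, nsmul_eq_mul] using this
    have hZ : (a : ℤ) * c = (b : ℤ) * ((c:ℤ) - 1) := by linarith
    have hN : a * c = b * (c - 1) := by
      have : ((a * c : ℕ) : ℤ) = ((b * (c - 1) : ℕ) : ℤ) := by push_cast [hc1]; linarith
      exact_mod_cast this
    have hcop : Nat.Coprime (c - 1) c := by
      have h : c - 1 + 1 = c := by omega
      rw [← h]
      exact Nat.coprime_self_add_right.2 (Nat.coprime_one_right _)
    have hdvd : (c - 1) ∣ a := by
      apply hcop.dvd_of_dvd_mul_right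
      exact ⟨b, by rw [hN, Nat.mul_comm]⟩
    obtain ⟨k, hk⟩ := hdvd
    have hbk : b = k * c := by
      have h1 : b * (c - 1) = (k * c) * (c - 1) := by rw [← hN, hk]; ring
      have h2 : 0 < c - 1 := by omega
      exact Nat.eq_of_mul_eq_mul_right h2 h1
    have hcardT : T.card = a + b := by
      rw [hTeq]; simp
    refine ⟨k, ?_⟩
    rw [hcardT, hk, hbk]
    have h3 : 2 * c - 1 = (c - 1) + c := by omega
    rw [h3, add_mul]; ring
  have hmemS : ∀ y ∈ S, y = (c:ℤ) ∨ y = 1 - (c:ℤ) := by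
    intro y hy
    rw [hS] at hy
    rcases Multiset.mem_add.1 hy with h | h <;>
      simp [Multiset.eq_of_mem_replicate h]
  refine ⟨hsum, hcard, ?_, ?_⟩
  · intro x hx T hT hTsum
    apply key T _ hTsum
    intro y hy
    have hyS : y ∈ x • S := Multiset.mem_of_le hT hy
    rw [Multiset.mem_nsmul] at hyS
    exact hmemS y hyS.2
  · intro t ht N
    refine ⟨(N + 1) • S, ?_, ?_, ?_, ?_⟩
    · intro y hy
      rw [Multiset.mem_nsmul] at hy
      have h2 : (2:ℤ) ≤ (c:ℤ) := by exact_mod_cast hc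
      rcases hmemS y hy.2 with h | h <;> subst h <;> constructor <;> linarith
    · rw [Multiset.sum_nsmul, hsum, smul_zero]
    · rw [Multiset.card_nsmul, hcard]
      have : 1 ≤ 2 * c - 1 := by omega
      calc N ≤ (N + 1) * 1 := by omega
        _ ≤ (N + 1) * (2 * c - 1) := Nat.mul_le_mul_left _ this
    · intro T hT hTcard hTsum
      apply ht
      rw [← hTcard]
      apply key T _ hTsum
      intro y hy
      have hyS : y ∈ (N+1) • S := Multiset.mem_of_le hT hy
      rw [Multiset.mem_nsmul] at hyS
      exact hmemS y hyS.2
end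

section
/- Let β be a positive integer and X a finite multiset of integers with |X| ≥ β. Then X can be partitioned as X = X₀ ⊎ X₁ ⊎ … ⊎ X_r such that: (i) |X₀| ≤ β - 1 and no nonempty sub-multiset of X₀ has sum divisible by β; (ii) for each j ∈ [1, r], |X_j| ≤ β and β divides the sum of X_j. -/
lemma key_aux (β : ℕ) (hβ : 0 < β) (S : Multiset ℤ) (l : List ℤ) (i j : ℕ)
    (h : i < j) (hj : j ≤ β)
    (hfeq : (((l.take i).sum : ℤ) : ZMod β) = (((l.take j).sum : ℤ) : ZMod β))
    (hlen : l.length = β) (hlS : (l : Multiset ℤ) ≤ S) :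
    ∃ T : Multiset ℤ, T ≤ S ∧ T ≠ 0 ∧ T.card ≤ β ∧ (β : ℤ) ∣ T.sum := by
  set seg : List ℤ := (l.take j).drop i with hseg
  have hsplit : l.take i ++ seg = l.take j := by
    have h2 := List.take_append_drop i (l.take j)
    rwa [List.take_take, min_eq_left h.le] at h2
  refine ⟨(seg : Multiset ℤ), ?_, ?_, ?_, ?_⟩
  · calc (seg : Multiset ℤ) ≤ (l : Multiset ℤ) :=
        (((List.drop_sublist _ _).trans (List.take_sublist _ _))).subperm
      _ ≤ S := hlS
  · have hlenseg : seg.length = j - i := by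
      simp [hseg, List.length_drop, List.length_take, hlen]
      omega
    intro hc
    have : seg.length = 0 := by
      simpa using congrArg Multiset.card hc
    omega
  · calc (seg : Multiset ℤ).card = seg.length := by simp
      _ ≤ (l.take j).length := by simpa [hseg] using (List.drop_sublist _ _).length_le
      _ ≤ β := by simp [List.length_take, hlen]
  · have hsum : (l.take i).sum + seg.sum = (l.take j).sum := by
      rw [← List.sum_append, hsplit]
    have hdvd : (β : ℤ) ∣ ((l.take j).sum - (l.take i).sum) := by
      have hz : ((((l.take j).sum - (l.take i).sum : ℤ)) : ZMod β) = 0 := by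
        rw [Int.cast_sub, ← hfeq, sub_self]
      exact (ZMod.intCast_zmod_eq_zero_iff_dvd _ _).mp hz
    have : ((seg : Multiset ℤ)).sum = (l.take j).sum - (l.take i).sum := by
      rw [Multiset.sum_coe]
      omega
    rw [this]
    exact hdvd

/-- Pigeonhole: any multiset of integers with at least `β` elements has a nonempty
sub-multiset of size at most `β` whose sum is divisible by `β`. -/
lemma key_lemma (β : ℕ) (hβ : 0 < β) (S : Multiset ℤ) (hS : β ≤ S.card) :
    ∃ T : Multiset ℤ, T ≤ S ∧ T ≠ 0 ∧ T.card ≤ β ∧ (β : ℤ) ∣ T.sum := by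
  haveI : NeZero β := ⟨hβ.ne'⟩
  set l : List ℤ := S.toList.take β with hl
  have hlen : l.length = β := by
    simp [hl, List.length_take, Multiset.length_toList]
    omega
  have hlS : (l : Multiset ℤ) ≤ S := by
    calc (l : Multiset ℤ) ≤ (S.toList : Multiset ℤ) :=
          (List.take_sublist _ _).subperm
      _ = S := S.coe_toList
  let f : Fin (β + 1) → ZMod β := fun i => (((l.take i).sum : ℤ) : ZMod β)
  have hcard : Fintype.card (ZMod β) < Fintype.card (Fin (β + 1)) := by
    simp [ZMod.card]
  obtain ⟨i, j, hij, hfeq⟩ := Fintype.exists_ne_map_eq_of_card_lt f hcard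
  rcases lt_or_gt_of_ne (Fin.val_ne_of_ne hij) with h | h
  · exact key_aux β hβ S l i j h (by omega) hfeq hlen hlS
  · exact key_aux β hβ S l j i h (by omega) hfeq.symm hlen hlS

lemma main_aux (β : ℕ) (hβ : 0 < β) : ∀ n (X : Multiset ℤ), X.card = n →
    ∃ (X₀ : Multiset ℤ) (L : List (Multiset ℤ)),
      X = X₀ + L.sum ∧
      (∀ T : Multiset ℤ, T ≤ X₀ → T ≠ 0 → ¬ ((β : ℤ) ∣ T.sum)) ∧
      (∀ Y ∈ L, Y.card ≤ β ∧ (β : ℤ) ∣ Y.sum) := by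
  intro n
  induction n using Nat.strong_induction_on with
  | _ n ih =>
    intro X hX
    by_cases h : ∃ T : Multiset ℤ, T ≤ X ∧ T ≠ 0 ∧ (β : ℤ) ∣ T.sum
    · obtain ⟨T, hTX, hT0, hTd⟩ := h
      -- get T' ≤ X, nonempty, card ≤ β, divisible
      obtain ⟨T', hT'X, hT'0, hT'c, hT'd⟩ :
          ∃ T' : Multiset ℤ, T' ≤ X ∧ T' ≠ 0 ∧ T'.card ≤ β ∧ (β : ℤ) ∣ T'.sum := by
        by_cases hc : T.card ≤ β
        · exact ⟨T, hTX, hT0, hc, hTd⟩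
        · obtain ⟨T', h1, h2, h3, h4⟩ := key_lemma β hβ T (by omega)
          exact ⟨T', h1.trans hTX, h2, h3, h4⟩
      have hcard : (X - T').card < n := by
        have h1 : (X - T').card = X.card - T'.card := Multiset.card_sub hT'X
        have hpos : 0 < T'.card := Multiset.card_pos.mpr hT'0
        have h2 := Multiset.card_le_card hT'X
        omega
      obtain ⟨X₀, L, hXeq, hX₀, hL⟩ := ih _ hcard (X - T') rfl
      refine ⟨X₀, T' :: L, ?_, hX₀, ?_⟩
      · have : X = (X - T') + T' := (tsub_add_cancel_of_le hT'X).symm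
        rw [this, hXeq, List.sum_cons]
        abel
      · intro Y hY
        rcases List.mem_cons.mp hY with rfl | hY
        · exact ⟨hT'c, hT'd⟩
        · exact hL Y hY
    · push_neg at h
      exact ⟨X, [], by simp, fun T hT hT0 => h T hT hT0, by simp⟩

theorem factorization_mod_beta (β : ℕ) (hβ : 0 < β) (X : Multiset ℤ)
    (hX : β ≤ X.card) :
    ∃ (X₀ : Multiset ℤ) (L : List (Multiset ℤ)),
      X = X₀ + L.sum ∧
      X₀.card ≤ β - 1 ∧
      (∀ T : Multiset ℤ, T ≤ X₀ → T ≠ 0 → ¬ ((β : ℤ) ∣ T.sum)) ∧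
      (∀ Y ∈ L, Y.card ≤ β ∧ (β : ℤ) ∣ Y.sum) := by
  obtain ⟨X₀, L, heq, h₀, hL⟩ := main_aux β hβ X.card X rfl
  refine ⟨X₀, L, heq, ?_, h₀, hL⟩
  by_contra hc
  push_neg at hc
  obtain ⟨T, h1, h2, _, h4⟩ := key_lemma β hβ X₀ (by omega)
  exact h₀ T h1 h2 h4
end

section
/- Let k and t be positive integers. Define s'_t(I_k) as the least positive integer ℓ such that every zero-sum multiset over I_k = {-k, …, k} of length at least ℓ contains a zero-sum sub-multiset of length t (and ∞ if none exists). If s'_t(I_k) is finite, then every integer in [1, max(2, 2k-1)] divides t. -/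
lemma two_val_decomp (u v : ℤ) (T : Multiset ℤ) (h : ∀ z ∈ T, z = u ∨ z = v) :
    ∃ x y : ℕ, T = Multiset.replicate x u + Multiset.replicate y v := by
  induction T using Multiset.induction with
  | empty => exact ⟨0, 0, rfl⟩
  | cons a s ih =>
    obtain ⟨x, y, rfl⟩ := ih (fun z hz => h z (Multiset.mem_cons_of_mem hz))
    rcases h a (Multiset.mem_cons_self a _) with rfl | rfl
    · exact ⟨x + 1, y, by rw [Multiset.replicate_succ]; simp⟩
    · refine ⟨x, y + 1, ?_⟩
      rw [Multiset.replicate_succ]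
      rw [show Multiset.replicate x u + (a ::ₘ Multiset.replicate y a)
          = a ::ₘ (Multiset.replicate x u + Multiset.replicate y a) by
        simp [Multiset.cons_swap, Multiset.cons_add, Multiset.add_cons]]

lemma key (k t : ℕ)
    (hfin : ∃ ℓ : ℕ, ∀ S : Multiset ℤ,
      (∀ x ∈ S, -(k : ℤ) ≤ x ∧ x ≤ (k : ℤ)) → S.sum = 0 → ℓ ≤ S.card →
      ∃ T : Multiset ℤ, T ≤ S ∧ T.card = t ∧ T.sum = 0)
    (a b : ℕ) (ha : 0 < a) (hb : 0 < b) (hak : a ≤ k) (hbk : b ≤ k)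
    (hco : Nat.Coprime a b) : (a + b) ∣ t := by
  obtain ⟨ℓ, hℓ⟩ := hfin
  set S : Multiset ℤ :=
    Multiset.replicate (ℓ * b) (a : ℤ) + Multiset.replicate (ℓ * a) (-(b : ℤ)) with hS
  have hmem : ∀ x ∈ S, -(k : ℤ) ≤ x ∧ x ≤ (k : ℤ) := by
    intro x hx
    rw [hS, Multiset.mem_add] at hx
    rcases hx with hx | hx <;> rcases Multiset.eq_of_mem_replicate hx with rfl
    · constructor
      · have : (0:ℤ) ≤ a := by positivity
        linarith [show (0:ℤ) ≤ (k:ℤ) by positivity]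
      · exact_mod_cast hak
    · constructor
      · have : (b:ℤ) ≤ k := by exact_mod_cast hbk
        linarith
      · have : (0:ℤ) ≤ b := by positivity
        linarith [show (0:ℤ) ≤ (k:ℤ) by positivity]
  have hsum : S.sum = 0 := by
    rw [hS]
    simp [Multiset.sum_replicate, nsmul_eq_mul]
    push_cast
    ring
  have hcard : ℓ ≤ S.card := by
    rw [hS]
    simp [Multiset.card_replicate]
    calc ℓ = ℓ * 1 := (mul_one ℓ).symm
    _ ≤ ℓ * b + ℓ * a := by
        have : 1 ≤ b := hb
        nlinarith
  obtain ⟨T, hTS, hTcard, hTsum⟩ := hℓ S hmem hsum hcard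
  have hTm : ∀ z ∈ T, z = (a : ℤ) ∨ z = -(b : ℤ) := by
    intro z hz
    have := Multiset.mem_of_le hTS hz
    rw [hS, Multiset.mem_add] at this
    rcases this with h | h
    · exact Or.inl (Multiset.eq_of_mem_replicate h)
    · exact Or.inr (Multiset.eq_of_mem_replicate h)
  obtain ⟨x, y, rfl⟩ := two_val_decomp _ _ T hTm
  simp [Multiset.card_replicate] at hTcard
  simp [Multiset.sum_replicate, nsmul_eq_mul] at hTsum
  have hxy : x * a = y * b := by
    have : (x : ℤ) * a = y * b := by linarith
    exact_mod_cast this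
  have hbx : b ∣ x := (Nat.Coprime.dvd_of_dvd_mul_right hco.symm) ⟨y, by rw [hxy, mul_comm]⟩
  obtain ⟨m, rfl⟩ := hbx
  have hy : y = m * a := by
    have h1 : b * (m * a) = b * y := by rw [← mul_assoc, hxy, mul_comm]
    exact (Nat.eq_of_mul_eq_mul_left hb h1).symm
  refine ⟨m, ?_⟩
  rw [← hTcard, hy]
  ring

theorem finite_implies_divides (k t : ℕ) (hk : 0 < k) (ht : 0 < t)
    (hfin : ∃ ℓ : ℕ, ∀ S : Multiset ℤ,
      (∀ x ∈ S, -(k : ℤ) ≤ x ∧ x ≤ (k : ℤ)) → S.sum = 0 → ℓ ≤ S.card →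
      ∃ T : Multiset ℤ, T ≤ S ∧ T.card = t ∧ T.sum = 0) :
    ∀ d ∈ Finset.Icc 1 (max 2 (2 * k - 1)), d ∣ t := by
  intro d hd
  rw [Finset.mem_Icc] at hd
  obtain ⟨hd1, hd2⟩ := hd
  rw [Nat.dvd_iff_prime_pow_dvd_dvd]
  intro p e hp hpe
  have hpp : p.Prime := hp
  have hq : p ^ e ≤ d := Nat.le_of_dvd (by omega) hpe
  set q := p ^ e with hq'
  rcases Nat.eq_zero_or_pos e with rfl | he
  · simp [hq']
  have hq2 : 2 ≤ q := by
    calc 2 ≤ p := hpp.two_le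
    _ = p ^ 1 := (pow_one p).symm
    _ ≤ p ^ e := Nat.pow_le_pow_right hpp.pos he
  have hqmax : q ≤ max 2 (2 * k - 1) := le_trans hq hd2
  rcases eq_or_lt_of_le hq2 with h2 | h3
  · -- q = 2 : use a = b = 1
    rw [← h2]
    exact key k t hfin 1 1 one_pos one_pos hk hk (Nat.coprime_one_left 1)
  · -- q ≥ 3, hence q ≤ 2k - 1 and k ≥ 2
    have hq2k : q ≤ 2 * k - 1 := by omega
    rcases Nat.even_or_odd q with heven | hodd
    · -- q = 2^e with e ≥ 2, set b = q/2 - 1, a = q/2 + 1, both odd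
      have hped : p = 2 := by
        rcases hpp.eq_two_or_odd' with h | h
        · exact h
        · exfalso
          have : Odd q := h.pow
          exact (Nat.not_odd_iff_even.mpr heven) this
      subst hped
      have he2 : 2 ≤ e := by
        by_contra h
        interval_cases e <;> omega
      have h4q : 4 ∣ q := by
        rw [hq']
        calc (4:ℕ) = 2 ^ 2 := rfl
        _ ∣ 2 ^ e := pow_dvd_pow 2 he2
      obtain ⟨c, hc⟩ := heven
      have hc2 : 2 ≤ c := by omega
      have hcodd : Odd (c - 1) := Nat.odd_iff.mpr (by omega)
      rw [show q = (c + 1) + (c - 1) by omega]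
      refine key k t hfin (c + 1) (c - 1) (by omega) (by omega) (by omega) (by omega) ?_
      rw [show c + 1 = 2 + (c - 1) by omega]
      exact Nat.coprime_add_self_left.mpr (Nat.coprime_two_left.mpr hcodd)
    · -- q odd : a = (q+1)/2 = b+1, b = (q-1)/2
      obtain ⟨c, hc⟩ := hodd
      have hce : q = (c + 1) + c := by omega
      rw [hce]
      refine key k t hfin (c+1) c (by omega) (by omega) (by omega) (by omega) ?_
      rw [add_comm]
      exact Nat.coprime_add_self_left.mpr (Nat.coprime_one_left c)
end

section
/- Let k and t be positive integers such that every integer in [1, max(2, 2k-1)] divides t. Then s'_t(I_k) ≥ t + k(k-1); that is, there exists a zero-sum multiset over I_k = {-k, …, k} of length t + k(k-1) - 1 with no zero-sum sub-multiset of length t. -/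
theorem lower_bound (k t : ℕ) (hk : 0 < k) (ht : 0 < t)
    (hdiv : ∀ d ∈ Finset.Icc 1 (max 2 (2 * k - 1)), d ∣ t) :
    ∃ S : Multiset ℤ,
      (∀ x ∈ S, -(k : ℤ) ≤ x ∧ x ≤ (k : ℤ)) ∧ S.sum = 0 ∧
      S.card = t + k * (k - 1) - 1 ∧
      ∀ T : Multiset ℤ, T ≤ S → T.card = t → T.sum ≠ 0 := by
  obtain ⟨y, hy⟩ : (k + 1) ∣ t := hdiv (k + 1) (by simp only [Finset.mem_Icc]; omega)
  have hy1 : 1 ≤ y := by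
    rcases y with _ | n
    · simp at hy; omega
    · omega
  obtain ⟨x, rfl⟩ : ∃ x, y = x + 1 := ⟨y - 1, by omega⟩
  have hk1cast : ((k - 1 : ℕ) : ℤ) = (k : ℤ) - 1 := by omega
  have hy' : t = k * x + x + k + 1 := by rw [hy]; ring
  have hf1 : ¬((k : ℤ) - 1 = (k : ℤ)) := by omega
  have hf2 : ¬((-1 : ℤ) = (k : ℤ)) := by omega
  have hf3 : ¬((k : ℤ) = (k : ℤ) - 1) := by omega
  have hf4 : ¬((-1 : ℤ) = (k : ℤ) - 1) := by omega
  have hf5 : ¬((k : ℤ) = -1) := by omega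
  have hf6 : ¬((k : ℤ) - 1 = -1) := by omega
  refine ⟨Multiset.replicate x (k : ℤ) + Multiset.replicate k ((k : ℤ) - 1) +
      Multiset.replicate (k * x + k * (k - 1)) (-1), ?_, ?_, ?_, ?_⟩
  · intro z hz
    simp only [Multiset.mem_add, Multiset.mem_replicate] at hz
    rcases hz with (⟨-, rfl⟩ | ⟨-, rfl⟩) | ⟨-, rfl⟩ <;> constructor <;> omega
  · simp only [Multiset.sum_add, Multiset.sum_replicate, nsmul_eq_mul]
    push_cast [hk1cast]
    ring
  · simp only [Multiset.card_add, Multiset.card_replicate]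
    generalize hA : k * x = A at hy' ⊢
    generalize hB : k * (k - 1) = B at hy' ⊢
    omega
  · intro T hTS hTt h0
    set S : Multiset ℤ := Multiset.replicate x (k : ℤ) + Multiset.replicate k ((k : ℤ) - 1) +
      Multiset.replicate (k * x + k * (k - 1)) (-1) with hS
    set U : Multiset ℤ := S - T with hU
    have hUS : U ≤ S := tsub_le_self
    have hTU : U + T = S := tsub_add_cancel_of_le hTS
    set α := U.count (k : ℤ) with hα
    set β := U.count ((k : ℤ) - 1) with hβ
    set v := U.count (-1 : ℤ) with hv
    have hUeq : U = Multiset.replicate α (k : ℤ) + Multiset.replicate β ((k : ℤ) - 1) +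
        Multiset.replicate v (-1) := by
      refine Multiset.ext.mpr fun b => ?_
      simp only [Multiset.count_add, Multiset.count_replicate]
      by_cases hb1 : b = (k : ℤ)
      · subst hb1
        simp [hα, hf1, hf2]
      · by_cases hb2 : b = (k : ℤ) - 1
        · subst hb2
          simp [hβ, hf3, hf4]
        · by_cases hb3 : b = (-1 : ℤ)
          · subst hb3
            simp [hv, hf5, hf6]
          · rw [if_neg (fun h => hb1 h.symm), if_neg (fun h => hb2 h.symm),
              if_neg (fun h => hb3 h.symm)]
            simp only [add_zero]
            rw [Multiset.count_eq_zero]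
            intro hbU
            have hbS := Multiset.mem_of_le hUS hbU
            simp only [hS, Multiset.mem_add, Multiset.mem_replicate] at hbS
            rcases hbS with (⟨-, h⟩ | ⟨-, h⟩) | ⟨-, h⟩ <;> [exact hb1 h; exact hb2 h; exact hb3 h]
    have hUcard : U.card = α + β + v := by
      rw [hUeq]; simp [Multiset.card_add, Multiset.card_replicate]
    have hUsum : U.sum = 0 := by
      have h := congrArg Multiset.sum hTU
      rw [Multiset.sum_add, h0, add_zero] at h
      rw [h]
      simp only [hS, Multiset.sum_add, Multiset.sum_replicate, nsmul_eq_mul]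
      push_cast [hk1cast]
      ring
    have hScard : Multiset.card S = x + k + (k * x + k * (k - 1)) := by
      simp [hS, Multiset.card_add, Multiset.card_replicate]
    have hcards : Multiset.card T + Multiset.card U = Multiset.card S := by
      rw [← Multiset.card_add, add_comm T U, hTU]
    have hcard2 : α + β + v + 1 = k * (k - 1) := by
      rw [hUcard] at hcards
      rw [hScard, hTt] at hcards
      generalize hA : k * x = A at hy' hcards ⊢
      generalize hB : k * (k - 1) = B at hcards ⊢
      omega
    have hbk : β ≤ k := by
      have h := Multiset.count_le_of_le ((k : ℤ) - 1) hUS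
      have h2 : Multiset.count ((k : ℤ) - 1) S = k := by
        simp only [hS, Multiset.count_add, Multiset.count_replicate]
        simp [hf3, hf4]
      rw [← hβ, h2] at h
      exact h
    have hsum2 : (α : ℤ) * k + (β : ℤ) * ((k : ℤ) - 1) - v = 0 := by
      rw [hUeq] at hUsum
      simp only [Multiset.sum_add, Multiset.sum_replicate, nsmul_eq_mul] at hUsum
      linarith
    have hcardZ : (α : ℤ) + β + v + 1 = (k : ℤ) * ((k : ℤ) - 1) := by
      have h := congrArg (Nat.cast (R := ℤ)) hcard2
      push_cast [hk1cast] at h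
      linarith
    have h5 : (β : ℤ) + 1 = ((k : ℤ) + 1) * ((α : ℤ) + β - k + 2) := by
      linear_combination -hsum2 - hcardZ
    have hαnn : (0 : ℤ) ≤ (α : ℤ) := Int.natCast_nonneg α
    have hβnn : (0 : ℤ) ≤ (β : ℤ) := Int.natCast_nonneg β
    have hK1 : (1 : ℤ) ≤ (k : ℤ) := by exact_mod_cast hk
    have he : 1 ≤ (α : ℤ) + β - k + 2 := by
      by_contra h
      push_neg at h
      have he0 : (α : ℤ) + β - k + 2 ≤ 0 := by omega
      have := mul_nonpos_of_nonneg_of_nonpos (show (0:ℤ) ≤ (k:ℤ) + 1 by linarith) he0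
      linarith
    have hbK : (β : ℤ) = k := by
      have h6 : ((k : ℤ) + 1) * 1 ≤ ((k : ℤ) + 1) * ((α : ℤ) + β - k + 2) :=
        mul_le_mul_of_nonneg_left he (by linarith)
      have hbk' : (β : ℤ) ≤ k := by exact_mod_cast hbk
      linarith [h5, h6]
    have hfin : (α : ℤ) * ((k : ℤ) + 1) + ((k : ℤ) + 1) = 0 := by
      linear_combination hsum2 + hcardZ - (k : ℤ) * hbK
    have hge : (0 : ℤ) ≤ (α : ℤ) * ((k : ℤ) + 1) :=
      mul_nonneg hαnn (by linarith)
    linarith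
end

section
/- Let t be a positive integer divisible by 2. Then s'_t(I_1) = t; that is, every zero-sum multiset over {-1, 0, 1} of length at least t contains a zero-sum sub-multiset of length exactly t, and t is least with this property. -/
lemma sum_count_aux (S : Multiset ℤ) (h : ∀ x ∈ S, -1 ≤ x ∧ x ≤ 1) :
    S.sum = (S.count 1 : ℤ) - (S.count (-1) : ℤ) ∧
    S.card = S.count 1 + S.count (-1) + S.count 0 := by
  induction S using Multiset.induction with
  | empty => simp
  | cons x s ih =>
    have hx := h x (Multiset.mem_cons_self x s)
    have hs := ih (fun y hy => h y (Multiset.mem_cons_of_mem hy))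
    have hx3 : x = -1 ∨ x = 0 ∨ x = 1 := by omega
    rcases hx3 with rfl | rfl | rfl <;>
      simp [Multiset.count_cons, hs.1, hs.2] <;> omega

theorem s'_I1 (t : ℕ) (ht : 0 < t) (h2 : 2 ∣ t) :
    (∀ S : Multiset ℤ,
      (∀ x ∈ S, -1 ≤ x ∧ x ≤ 1) → S.sum = 0 → t ≤ S.card →
      ∃ T : Multiset ℤ, T ≤ S ∧ T.card = t ∧ T.sum = 0) ∧
    (∃ S : Multiset ℤ,
      (∀ x ∈ S, -1 ≤ x ∧ x ≤ 1) ∧ S.sum = 0 ∧ S.card = t - 1 ∧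
      ∀ T : Multiset ℤ, T ≤ S → T.card = t → T.sum ≠ 0) := by
  constructor
  · intro S hmem hsum hcard
    obtain ⟨hs1, hs2⟩ := sum_count_aux S hmem
    set a := S.count 1 with ha
    set b := S.count (-1) with hb
    set c := S.count 0 with hc
    have hab : a = b := by omega
    obtain ⟨u, hu⟩ := h2
    set k := min a u with hk
    set m := t - 2 * k with hm
    have hkm : 2 * k + m = t := by omega
    have hma : m ≤ c := by omega
    refine ⟨Multiset.replicate k 1 + Multiset.replicate k (-1) + Multiset.replicate m 0,
      ?_, ?_, ?_⟩
    · rw [Multiset.le_iff_count]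
      intro x
      simp only [Multiset.count_add, Multiset.count_replicate]
      rcases eq_or_ne x 1 with rfl | h1
      · simp; omega
      rcases eq_or_ne x (-1) with rfl | hneg
      · simp; omega
      rcases eq_or_ne x 0 with rfl | h0
      · simp; omega
      · simp [Ne.symm h1, Ne.symm hneg, Ne.symm h0]
    · simp; omega
    · simp [Multiset.sum_replicate]
  · refine ⟨Multiset.replicate (t - 1) 0, ?_, ?_, ?_, ?_⟩
    · intro x hx
      rw [Multiset.eq_of_mem_replicate hx]; constructor <;> norm_num
    · simp
    · simp
    · intro T hT hTcard
      have := Multiset.card_le_card hT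
      simp at this
      omega
end

section
/- Let t be a positive integer divisible by both 2 and 3 (equivalently by every integer in [1, D(I_2)] = [1,3]). Then s'_t(I_2) = t + 2; that is, every zero-sum multiset over {-2,-1,0,1,2} of length at least t+2 contains a zero-sum sub-multiset of length exactly t, and there is a zero-sum multiset of length t+1 over {-2,…,2} with no zero-sum sub-multiset of length t. -/
private lemma sel_aux (c1 c2 c3 t : ℕ) (ht6 : 6 ∣ t)
    (h : t + 2 ≤ c1 + 2*c2 + 3*c3) :
    ∃ x1 x2 x3, x1 ≤ c1 ∧ x2 ≤ c2 ∧ x3 ≤ c3 ∧ x1 + 2*x2 + 3*x3 = t := by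
  by_cases h3 : t ≤ 3*c3
  · exact ⟨0, 0, t/3, by omega, by omega, by omega, by omega⟩
  · by_cases hv : 2*c2 < t - 3*c3
    · exact ⟨t - 3*c3 - 2*c2, c2, c3, by omega, by omega, by omega, by omega⟩
    · by_cases he : 2 ∣ (t - 3*c3)
      · exact ⟨0, (t - 3*c3)/2, c3, by omega, by omega, by omega, by omega⟩
      · by_cases hc1 : 1 ≤ c1
        · exact ⟨1, (t - 3*c3 - 1)/2, c3, by omega, by omega, by omega, by omega⟩
        · exact ⟨0, (t - 3*(c3-1))/2, c3 - 1, by omega, by omega, by omega, by omega⟩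

private lemma arith_aux (a2 a1 a0 am1 am2 t : ℕ) (ht6 : 6 ∣ t)
    (hsum : 2*a2 + a1 = am1 + 2*am2)
    (hcard : t + 2 ≤ a2 + a1 + a0 + am1 + am2) :
    ∃ b2 b1 b0 bm1 bm2, b2 ≤ a2 ∧ b1 ≤ a1 ∧ b0 ≤ a0 ∧ bm1 ≤ am1 ∧ bm2 ≤ am2 ∧
      b2 + b1 + b0 + bm1 + bm2 = t ∧ 2*b2 + b1 = bm1 + 2*bm2 := by
  rcases lt_trichotomy a2 am2 with h | h | h
  · -- triples (1,1,-2), count am2 - a2; also a1 = am1 + 2*(am2 - a2)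
    obtain ⟨x1, x2, x3, hx1, hx2, hx3, hxt⟩ :=
      sel_aux a0 (am1 + a2) (am2 - a2) t ht6 (by omega)
    refine ⟨x2 - min x2 am1, min x2 am1 + 2*x3, x1, min x2 am1, (x2 - min x2 am1) + x3,
      by omega, by omega, by omega, by omega, by omega, by omega, by omega⟩
  · -- balanced: a1 = am1
    obtain ⟨x1, x2, x3, hx1, hx2, hx3, hxt⟩ :=
      sel_aux a0 (a1 + a2) 0 t ht6 (by omega)
    refine ⟨x2 - min x2 a1, min x2 a1, x1, min x2 a1, x2 - min x2 a1,
      by omega, by omega, by omega, by omega, by omega, by omega, by omega⟩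
  · -- triples (2,-1,-1), count a2 - am2; am1 = a1 + 2*(a2 - am2)
    obtain ⟨x1, x2, x3, hx1, hx2, hx3, hxt⟩ :=
      sel_aux a0 (a1 + am2) (a2 - am2) t ht6 (by omega)
    refine ⟨(x2 - min x2 a1) + x3, min x2 a1, x1, min x2 a1 + 2*x3, x2 - min x2 a1,
      by omega, by omega, by omega, by omega, by omega, by omega, by omega⟩

private lemma counts_aux (S : Multiset ℤ) (hS : ∀ x ∈ S, -2 ≤ x ∧ x ≤ 2) :
    S.card = S.count 2 + S.count 1 + S.count 0 + S.count (-1) + S.count (-2) ∧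
    S.sum = 2*(S.count 2 : ℤ) + (S.count 1 : ℤ) - (S.count (-1) : ℤ) - 2*(S.count (-2) : ℤ) := by
  induction S using Multiset.induction_on with
  | empty => simp
  | cons a S ih =>
    have ha := hS a (Multiset.mem_cons_self a S)
    have ih' := ih (fun x hx => hS x (Multiset.mem_cons_of_mem hx))
    have ha' : a = -2 ∨ a = -1 ∨ a = 0 ∨ a = 1 ∨ a = 2 := by omega
    rcases ha' with rfl | rfl | rfl | rfl | rfl <;>
      simp [Multiset.count_cons, Multiset.sum_cons] <;>
      push_cast <;> omega

theorem s'_I2 (t : ℕ) (ht : 0 < t) (h2 : 2 ∣ t) (h3 : 3 ∣ t) :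
    (∀ S : Multiset ℤ,
      (∀ x ∈ S, -2 ≤ x ∧ x ≤ 2) → S.sum = 0 → t + 2 ≤ S.card →
      ∃ T : Multiset ℤ, T ≤ S ∧ T.card = t ∧ T.sum = 0) ∧
    (∃ S : Multiset ℤ,
      (∀ x ∈ S, -2 ≤ x ∧ x ≤ 2) ∧ S.sum = 0 ∧ S.card = t + 1 ∧
      ∀ T : Multiset ℤ, T ≤ S → T.card = t → T.sum ≠ 0) := by
  have ht6 : 6 ∣ t := by omega
  constructor
  · intro S hS hsum hcard
    obtain ⟨hc, hs⟩ := counts_aux S hS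
    have hsum' : 2*(S.count 2) + S.count 1 = S.count (-1) + 2*(S.count (-2)) := by omega
    obtain ⟨b2, b1, b0, bm1, bm2, hb2, hb1, hb0, hbm1, hbm2, hbt, hbs⟩ :=
      arith_aux (S.count 2) (S.count 1) (S.count 0) (S.count (-1)) (S.count (-2)) t
        ht6 hsum' (by omega)
    refine ⟨Multiset.replicate b2 2 + Multiset.replicate b1 1 + Multiset.replicate b0 0
      + Multiset.replicate bm1 (-1) + Multiset.replicate bm2 (-2), ?_, ?_, ?_⟩
    · rw [Multiset.le_iff_count]
      intro x
      simp only [Multiset.count_add, Multiset.count_replicate]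
      rcases eq_or_ne x 2 with rfl | hx2
      · norm_num; omega
      rcases eq_or_ne x 1 with rfl | hx1
      · norm_num; omega
      rcases eq_or_ne x 0 with rfl | hx0
      · norm_num; omega
      rcases eq_or_ne x (-1) with rfl | hxm1
      · norm_num; omega
      rcases eq_or_ne x (-2) with rfl | hxm2
      · norm_num; omega
      simp [Ne.symm hx2, Ne.symm hx1, Ne.symm hx0, Ne.symm hxm1, Ne.symm hxm2]
    · simp [Multiset.card_replicate]; omega
    · simp [Multiset.sum_replicate, smul_eq_mul]
      push_cast
      omega
  · obtain ⟨k, hk⟩ := ht6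
    have hk1 : 1 ≤ k := by omega
    refine ⟨{2} + Multiset.replicate (3*k+1) (-1) + Multiset.replicate (3*k-1) 1, ?_, ?_, ?_, ?_⟩
    · intro x hx
      simp only [Multiset.mem_add, Multiset.mem_singleton, Multiset.mem_replicate] at hx
      rcases hx with (rfl | ⟨-, rfl⟩) | ⟨-, rfl⟩ <;> norm_num
    · simp [Multiset.sum_replicate, smul_eq_mul]
      have : ((3*k-1 : ℕ) : ℤ) = 3*k - 1 := by push_cast [hk1]; omega
      rw [this]; push_cast; ring
    · simp [Multiset.card_replicate]; omega
    · intro T hT hTc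
      obtain ⟨U, hU⟩ := Multiset.le_iff_exists_add.mp hT
      have hUc : U.card = 1 := by
        have := congrArg Multiset.card hU
        simp [Multiset.card_replicate] at this
        omega
      obtain ⟨x, rfl⟩ := Multiset.card_eq_one.mp hUc
      have hxS : x ∈ ({2} + Multiset.replicate (3*k+1) (-1) + Multiset.replicate (3*k-1) 1 : Multiset ℤ) := by
        rw [hU]; simp
      have hx : x = 2 ∨ x = -1 ∨ x = 1 := by
        simp only [Multiset.mem_add, Multiset.mem_singleton, Multiset.mem_replicate] at hxS
        tauto
      have hsum : T.sum + x = 0 := by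
        have := congrArg Multiset.sum hU
        simp [Multiset.sum_replicate, smul_eq_mul] at this
        have h1 : ((3*k-1 : ℕ) : ℤ) = 3*k - 1 := by push_cast [hk1]; omega
        rw [h1] at this
        push_cast at this
        linarith
      rcases hx with rfl | rfl | rfl <;> omega
end

section
/- The only minimal zero-sum multisets of length 4 over {-3,…,3} are, up to negation, {3, -1, -1, -1} and {3, 1, -2, -2}. -/
private lemma zss_pair_le12 (a b c d : ℤ) : ({a, b} : Multiset ℤ) ≤ {a, b, c, d} := by
  rw [Multiset.le_iff_count]; intro z
  simp [Multiset.count_cons, Multiset.count_singleton]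
  all_goals (split_ifs <;> omega)
private lemma zss_pair_le13 (a b c d : ℤ) : ({a, c} : Multiset ℤ) ≤ {a, b, c, d} := by
  rw [Multiset.le_iff_count]; intro z
  simp [Multiset.count_cons, Multiset.count_singleton]
  all_goals (split_ifs <;> omega)
private lemma zss_pair_le14 (a b c d : ℤ) : ({a, d} : Multiset ℤ) ≤ {a, b, c, d} := by
  rw [Multiset.le_iff_count]; intro z
  simp [Multiset.count_cons, Multiset.count_singleton]
  all_goals (split_ifs <;> omega)
private lemma zss_pair_le23 (a b c d : ℤ) : ({b, c} : Multiset ℤ) ≤ {a, b, c, d} := by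
  rw [Multiset.le_iff_count]; intro z
  simp [Multiset.count_cons, Multiset.count_singleton]
  all_goals (split_ifs <;> omega)
private lemma zss_pair_le24 (a b c d : ℤ) : ({b, d} : Multiset ℤ) ≤ {a, b, c, d} := by
  rw [Multiset.le_iff_count]; intro z
  simp [Multiset.count_cons, Multiset.count_singleton]
  all_goals (split_ifs <;> omega)
private lemma zss_pair_le34 (a b c d : ℤ) : ({c, d} : Multiset ℤ) ≤ {a, b, c, d} := by
  rw [Multiset.le_iff_count]; intro z
  simp [Multiset.count_cons, Multiset.count_singleton]
  all_goals (split_ifs <;> omega)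

private lemma zss_pair_ne_zero (x y : ℤ) : ({x, y} : Multiset ℤ) ≠ 0 := by
  simp [Multiset.insert_eq_cons]

private lemma zss_pair_ne (x y a b c d : ℤ) : ({x, y} : Multiset ℤ) ≠ {a, b, c, d} := by
  intro h
  apply_fun Multiset.card at h
  simp at h

private lemma zss_single_ne (x a b c d : ℤ) : ({x} : Multiset ℤ) ≠ {a, b, c, d} := by
  intro h
  apply_fun Multiset.card at h
  simp at h

private lemma zss_enum (a b c d : ℤ)
    (ha1 : -3 ≤ a) (ha2 : a ≤ 3) (hb1 : -3 ≤ b) (hb2 : b ≤ 3)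
    (hc1 : -3 ≤ c) (hc2 : c ≤ 3) (hd1 : -3 ≤ d) (hd2 : d ≤ 3)
    (hsum : a + b + c + d = 0)
    (h1 : a ≠ 0) (h2 : b ≠ 0) (h3 : c ≠ 0) (h4 : d ≠ 0)
    (p12 : a + b ≠ 0) (p13 : a + c ≠ 0) (p14 : a + d ≠ 0)
    (p23 : b + c ≠ 0) (p24 : b + d ≠ 0) (p34 : c + d ≠ 0) :
    (({a,b,c,d} : Multiset ℤ) = {3, -1, -1, -1} ∨ ({a,b,c,d} : Multiset ℤ) = {-3, 1, 1, 1} ∨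
     ({a,b,c,d} : Multiset ℤ) = {3, 1, -2, -2} ∨ ({a,b,c,d} : Multiset ℤ) = {-3, -1, 2, 2}) := by
  interval_cases a <;> interval_cases b <;> interval_cases c <;> interval_cases d <;>
    first | omega | decide

private lemma zss_min_check (S : Multiset ℤ)
    (h : ∀ T ∈ S.powerset, T ≠ 0 → T ≠ S → T.sum ≠ 0) :
    ∀ T : Multiset ℤ, T ≤ S → T ≠ 0 → T ≠ S → T.sum ≠ 0 := by
  intro T hT
  exact h T (Multiset.mem_powerset.mpr hT)

theorem minimal_zss_length_four (S : Multiset ℤ) :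
    ((∀ x ∈ S, -3 ≤ x ∧ x ≤ 3) ∧ S.sum = 0 ∧ S.card = 4 ∧
      (∀ T : Multiset ℤ, T ≤ S → T ≠ 0 → T ≠ S → T.sum ≠ 0)) ↔
    (S = {3, -1, -1, -1} ∨ S = {-3, 1, 1, 1} ∨
     S = {3, 1, -2, -2} ∨ S = {-3, -1, 2, 2}) := by
  constructor
  · rintro ⟨hbd, hs, hc, hmin⟩
    -- extract four elements
    have hpos : 0 < Multiset.card S := by omega
    obtain ⟨a, haS⟩ := Multiset.card_pos_iff_exists_mem.mp hpos
    obtain ⟨t, rfl⟩ := Multiset.exists_cons_of_mem haS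
    have hct : Multiset.card t = 3 := by
      simp [Multiset.card_cons] at hc; omega
    obtain ⟨b, c, d, rfl⟩ := Multiset.card_eq_three.mp hct
    have hS : a ::ₘ ({b, c, d} : Multiset ℤ) = ({a, b, c, d} : Multiset ℤ) := rfl
    rw [hS] at hbd hs hmin ⊢
    have hmema : a ∈ ({a,b,c,d} : Multiset ℤ) := by simp
    have hmemb : b ∈ ({a,b,c,d} : Multiset ℤ) := by simp
    have hmemc : c ∈ ({a,b,c,d} : Multiset ℤ) := by simp
    have hmemd : d ∈ ({a,b,c,d} : Multiset ℤ) := by simp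
    obtain ⟨ha1, ha2⟩ := hbd a hmema
    obtain ⟨hb1, hb2⟩ := hbd b hmemb
    obtain ⟨hc1, hc2⟩ := hbd c hmemc
    obtain ⟨hd1, hd2⟩ := hbd d hmemd
    have hsum : a + b + c + d = 0 := by
      have h := hs
      simp [Multiset.insert_eq_cons, Multiset.sum_cons] at h
      omega
    have h1 : a ≠ 0 := by
      simpa using hmin {a} (Multiset.singleton_le.mpr hmema) (by simp) (zss_single_ne a a b c d)
    have h2 : b ≠ 0 := by
      simpa using hmin {b} (Multiset.singleton_le.mpr hmemb) (by simp) (zss_single_ne b a b c d)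
    have h3 : c ≠ 0 := by
      simpa using hmin {c} (Multiset.singleton_le.mpr hmemc) (by simp) (zss_single_ne c a b c d)
    have h4 : d ≠ 0 := by
      simpa using hmin {d} (Multiset.singleton_le.mpr hmemd) (by simp) (zss_single_ne d a b c d)
    have p12 : a + b ≠ 0 := by
      simpa using hmin {a, b} (zss_pair_le12 a b c d) (zss_pair_ne_zero a b) (zss_pair_ne a b a b c d)
    have p13 : a + c ≠ 0 := by
      simpa using hmin {a, c} (zss_pair_le13 a b c d) (zss_pair_ne_zero a c) (zss_pair_ne a c a b c d)
    have p14 : a + d ≠ 0 := by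
      simpa using hmin {a, d} (zss_pair_le14 a b c d) (zss_pair_ne_zero a d) (zss_pair_ne a d a b c d)
    have p23 : b + c ≠ 0 := by
      simpa using hmin {b, c} (zss_pair_le23 a b c d) (zss_pair_ne_zero b c) (zss_pair_ne b c a b c d)
    have p24 : b + d ≠ 0 := by
      simpa using hmin {b, d} (zss_pair_le24 a b c d) (zss_pair_ne_zero b d) (zss_pair_ne b d a b c d)
    have p34 : c + d ≠ 0 := by
      simpa using hmin {c, d} (zss_pair_le34 a b c d) (zss_pair_ne_zero c d) (zss_pair_ne c d a b c d)
    exact zss_enum a b c d ha1 ha2 hb1 hb2 hc1 hc2 hd1 hd2 hsum h1 h2 h3 h4 p12 p13 p14 p23 p24 p34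
  · rintro (rfl | rfl | rfl | rfl) <;>
      refine ⟨by decide, by decide, by decide, zss_min_check _ (by decide)⟩
end

section
/- The only minimal zero-sum multisets of length 5 over {-3,…,3} are, up to negation, {3, 3, -2, -2, -2}. -/
/-!
In a minimal zero-sum multiset of length at least 3, `0` does not occur and no `x` occurs together
with `-x`, since `{0}` and `{x, -x}` would be proper zero-sum sub-multisets. Over `I_3` the positive
and negative parts of such a multiset of length 5 therefore use disjoint sets of absolute values,
and linear arithmetic on the seven multiplicities leaves only `3 + 3 = 2 + 2 + 2` and its negative.
Conversely, for coprime `a, b > 0`, `b` copies of `a` and `a` copies of `-b` form a minimal zero-sum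
multiset: a zero-sum sub-multiset with `i` copies of `a` and `j` of `-b` has `i a = j b`, so `b ∣ i`,
which forces `i = 0` or `i = b`.
-/

open Multiset

structure IsMinimalZeroSum {α : Type*} [AddCommMonoid α] (S : Multiset α) : Prop where
  ne_zero : S ≠ 0
  sum_eq_zero : S.sum = 0
  sum_ne_zero_of_le : ∀ T ≤ S, T ≠ 0 → T ≠ S → T.sum ≠ 0

namespace Multiset

variable {α : Type*} [DecidableEq α] {S : Multiset α} {a b : α}

theorem eq_replicate_add_replicate (hab : a ≠ b) (hS : card S ≤ count a S + count b S) :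
    S = replicate (count a S) a + replicate (count b S) b := by
  refine (eq_of_le_of_card_le (le_iff_count.2 fun x => ?_) (by simpa using hS)).symm
  simp only [count_add, count_replicate]
  split_ifs <;> simp_all

theorem eq_replicate_add_replicate_of_le {m n : ℕ} (hab : a ≠ b)
    (hS : S ≤ replicate m a + replicate n b) :
    S = replicate (count a S) a + replicate (count b S) b := by
  ext x
  have hx := le_iff_count.1 hS x
  simp only [count_add, count_replicate] at hx ⊢
  split_ifs at hx ⊢ <;> simp_all

end Multiset

namespace IsMinimalZeroSum

variable {α : Type*} [DecidableEq α] {S : Multiset α}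

theorem exists_count_lt [AddCommMonoid α] {W : Multiset α} (hS : IsMinimalZeroSum S)
    (hW0 : W ≠ 0) (hW : W.sum = 0) (hcard : card W < card S) :
    ∃ a ∈ W, count a S < count a W := by
  have hle : ¬W ≤ S := fun hle => hS.sum_ne_zero_of_le W hle hW0 (by rintro rfl; omega) hW
  obtain ⟨a, ha⟩ := not_forall.1 (mt le_iff_count.2 hle)
  exact ⟨a, count_pos.1 (by omega), by omega⟩

theorem zero_notMem [AddCommMonoid α] (hS : IsMinimalZeroSum S) (hcard : 1 < card S) :
    (0 : α) ∉ S := by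
  simpa using hS.exists_count_lt (W := {0}) (by simp) (by simp) hcard

theorem notMem_or_neg_notMem [AddCommGroup α] (hS : IsMinimalZeroSum S)
    (hcard : 2 < card S) {x : α} (hx : x ≠ -x) : x ∉ S ∨ -x ∉ S := by
  have := hS.exists_count_lt (W := {x, -x}) (by simp) (by simp) (by simpa using hcard)
  simpa [count_cons, hx, Ne.symm hx] using this

end IsMinimalZeroSum

theorem IsMinimalZeroSum.count_eq_of_card_eq_five {S : Multiset ℤ} (hS : IsMinimalZeroSum S)
    (hI : ∀ x ∈ S, -3 ≤ x ∧ x ≤ 3) (h5 : card S = 5) :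
    count 3 S = 2 ∧ count (-2) S = 3 ∨ count (-3) S = 2 ∧ count 2 S = 3 := by
  have h0 := hS.zero_notMem (by omega)
  have h1 := hS.notMem_or_neg_notMem (by omega) (x := 1) (by decide)
  have h2 := hS.notMem_or_neg_notMem (by omega) (x := 2) (by decide)
  have h3 := hS.notMem_or_neg_notMem (by omega) (x := 3) (by decide)
  simp only [← count_eq_zero] at h0 h1 h2 h3
  have hsub : ∀ x ∈ S, x ∈ Finset.Icc (-3 : ℤ) 3 := fun x hx => Finset.mem_Icc.2 (hI x hx)
  have hcard := sum_count_eq_card hsub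
  have hsum := Finset.sum_multiset_count_of_subset S _ fun x hx => hsub x (mem_toFinset.1 hx)
  rw [show Finset.Icc (-3 : ℤ) 3 = {-3, -2, -1, 0, 1, 2, 3} by rfl] at hcard hsum
  simp +decide only [Finset.sum_insert, Finset.mem_insert, Finset.mem_singleton,
    Finset.sum_singleton, hS.sum_eq_zero, nsmul_eq_mul] at hcard hsum
  omega

theorem isMinimalZeroSum_replicate_add_replicate_neg {a b : ℕ} (ha : 0 < a) (hb : 0 < b)
    (hab : a.Coprime b) : IsMinimalZeroSum (replicate b (a : ℤ) + replicate a (-b : ℤ)) := by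
  have hne : (a : ℤ) ≠ -b := by omega
  refine ⟨by rw [← card_pos]; simp; omega, by simp [mul_comm], fun T hT hT0 hTS hsum => hTS ?_⟩
  obtain ⟨i, j, rfl⟩ : ∃ i j, T = replicate i (a : ℤ) + replicate j (-b : ℤ) :=
    ⟨_, _, eq_replicate_add_replicate_of_le hne hT⟩
  have hi : i ≤ b := by simpa [count_replicate, ha.ne', hb.ne'] using count_le_of_le (a : ℤ) hT
  have hij : i * a = j * b := by
    simp only [sum_add, sum_replicate, smul_neg, nsmul_eq_mul] at hsum
    exact_mod_cast (by linarith : (i : ℤ) * a = j * b)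
  by_cases hi0 : i = 0
  · subst hi0
    obtain rfl : j = 0 := by simpa [hb.ne'] using hij.symm
    simp at hT0
  · obtain rfl : i = b :=
      Nat.eq_of_dvd_of_lt_two_mul hi0 (hab.symm.dvd_of_dvd_mul_right ⟨j, by rw [hij, mul_comm]⟩)
        (by omega)
    obtain rfl : j = a := Nat.eq_of_mul_eq_mul_right hb (by rw [← hij, mul_comm])
    rfl

theorem minimal_zss_length_five (S : Multiset ℤ) :
    ((∀ x ∈ S, -3 ≤ x ∧ x ≤ 3) ∧ S.sum = 0 ∧ S.card = 5 ∧
      (∀ T : Multiset ℤ, T ≤ S → T ≠ 0 → T ≠ S → T.sum ≠ 0)) ↔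
    (S = {3, 3, -2, -2, -2} ∨ S = {-3, -3, 2, 2, 2}) := by
  constructor
  · rintro ⟨hI, hsum, h5, hmin⟩
    have hS : IsMinimalZeroSum S := ⟨by rintro rfl; simp at h5, hsum, hmin⟩
    rcases hS.count_eq_of_card_eq_five hI h5 with ⟨h3, h2⟩ | ⟨h3, h2⟩
    · left
      rw [eq_replicate_add_replicate (by decide) (by omega : card S ≤ count 3 S + count (-2) S),
        h3, h2]
      rfl
    · right
      rw [eq_replicate_add_replicate (by decide) (by omega : card S ≤ count (-3) S + count 2 S),
        h3, h2]
      rfl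
  · rintro (rfl | rfl)
    · obtain ⟨-, hsum, hmin⟩ := isMinimalZeroSum_replicate_add_replicate_neg (a := 3) (b := 2)
        (by norm_num) (by norm_num) (by norm_num)
      exact ⟨by decide, hsum, rfl, hmin⟩
    · obtain ⟨-, hsum, hmin⟩ := add_comm (replicate 3 (2 : ℤ)) _ ▸
        isMinimalZeroSum_replicate_add_replicate_neg (a := 2) (b := 3)
          (by norm_num) (by norm_num) (by norm_num)
      exact ⟨by decide, hsum, rfl, hmin⟩
end

section
/- Let G be a finite abelian group with exponent n, and let s(G) be the smallest ℓ such that every multiset over G of length ≥ ℓ contains a zero-sum sub-multiset of length n, and s'(G) the smallest ℓ such that every zero-sum multiset over G of length ≥ ℓ contains a zero-sum sub-multiset of length n. If gcd(s(G) - 1, n) = 1, then s'(G) = s(G). -/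
theorem zhong_lemma_i (G : Type*) [AddCommGroup G] [Fintype G]
    (sG s'G : ℕ)
    (hs : IsLeast {ℓ : ℕ | ∀ S : Multiset G, ℓ ≤ S.card →
      ∃ T : Multiset G, T ≤ S ∧ T.card = AddMonoid.exponent G ∧ T.sum = 0} sG)
    (hs' : IsLeast {ℓ : ℕ | ∀ S : Multiset G, S.sum = 0 → ℓ ≤ S.card →
      ∃ T : Multiset G, T ≤ S ∧ T.card = AddMonoid.exponent G ∧ T.sum = 0} s'G)
    (hgcd : Nat.gcd (sG - 1) (AddMonoid.exponent G) = 1) :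
    s'G = sG := by
  set n := AddMonoid.exponent G with hn
  -- s' ≤ s
  have h1 : s'G ≤ sG := hs'.2 (fun S _ h => hs.1 S h)
  refine le_antisymm h1 ?_
  rcases Nat.eq_zero_or_pos sG with h0 | hpos
  · omega
  -- sG - 1 is not in the first set
  have hnot : ¬ (∀ S : Multiset G, sG - 1 ≤ S.card →
      ∃ T : Multiset G, T ≤ S ∧ T.card = n ∧ T.sum = 0) := by
    intro h
    have := hs.2 h
    omega
  push_neg at hnot
  obtain ⟨S, hScard, hST⟩ := hnot
  -- truncate S to card exactly sG - 1
  set S' : Multiset G := ((S.toList.take (sG - 1) : List G) : Multiset G) with hS'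
  have hS'le : S' ≤ S := by
    rw [hS']
    have : (S.toList.take (sG - 1)).Subperm S.toList := (List.take_sublist _ _).subperm
    calc (S.toList.take (sG - 1) : Multiset G) ≤ (S.toList : Multiset G) := this
      _ = S := S.coe_toList
  have hS'card : S'.card = sG - 1 := by
    rw [hS', Multiset.coe_card, List.length_take, Multiset.length_toList]
    omega
  have hannil : ∀ x : G, n • x = 0 := fun x => AddMonoid.exponent_nsmul_eq_zero x
  -- find g with (sG-1) • g = -S'.sum
  set σ := S'.sum with hσ
  set a := Nat.gcdA (sG - 1) n with ha
  set g : G := a • (-σ) with hg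
  have hbez : (1 : ℤ) = (sG - 1 : ℕ) * a + n * Nat.gcdB (sG - 1) n := by
    rw [ha]
    rw [← Nat.gcd_eq_gcd_ab, hgcd]; norm_num
  have hzn : ∀ (x : G), (n : ℤ) • x = 0 := by
    intro x
    rw [natCast_zsmul]; exact hannil x
  have hkey : (sG - 1) • g = -σ := by
    have : ((sG - 1 : ℕ) : ℤ) • g = -σ := by
      rw [hg, ← mul_zsmul]
      have : ((sG - 1 : ℕ) * a) • (-σ) =
          ((1 : ℤ) - n * Nat.gcdB (sG - 1) n) • (-σ) := by
        congr 1; omega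
      rw [this, sub_zsmul, one_zsmul, mul_comm, mul_zsmul]
      rw [hzn]
      simp
    rwa [natCast_zsmul] at this
  set S'' := S'.map (· + g) with hS''
  have hS''sum : S''.sum = 0 := by
    rw [hS'', Multiset.sum_map_add]
    simp only [Multiset.map_id', Multiset.map_const', Multiset.sum_replicate]
    rw [hS'card, hkey, ← hσ]
    simp
  have hS''card : S''.card = sG - 1 := by
    rw [hS'', Multiset.card_map, hS'card]
  -- S'' has no zero-sum n-subsequence, hence sG - 1 < s'G
  by_contra hlt
  push_neg at hlt
  have hle : s'G ≤ sG - 1 := by omega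
  obtain ⟨T, hTle, hTcard, hTsum⟩ := hs'.1 S'' hS''sum (by omega)
  -- pull T back to a sub-multiset of S'
  have hT' : T.map (· + (-g)) ≤ S''.map (· + (-g)) := Multiset.map_le_map hTle
  have hmapS : S''.map (· + (-g)) = S' := by
    rw [hS'', Multiset.map_map]
    simp [Function.comp]
  rw [hmapS] at hT'
  have hc : (T.map (· + (-g))).card = n := by rw [Multiset.card_map, hTcard]
  have hsum : (T.map (· + (-g))).sum = 0 := by
    rw [Multiset.sum_map_add]
    simp only [Multiset.map_id', Multiset.map_const', Multiset.sum_replicate]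
    rw [hTcard, hTsum, smul_neg, hannil]
    simp
  exact hST (T.map (· + (-g))) (le_trans hT' hS'le) hc hsum
end

section
/- Let h ≥ 2 and G ≅ (ℤ/2^h ℤ)². Then s'(G) = s(G) - 1 = 4·2^h - 4, where s(G) is the smallest ℓ such that every multiset over G of length ≥ ℓ has a zero-sum sub-multiset of length 2^h, and s'(G) is the analogous constant restricted to zero-sum multisets. -/
/-!
Everything is proved by halving. Reduction mod 2 maps `(ℤ/2m)²` onto the Klein group, and its
kernel consists of the doubles of `(ℤ/m)²`. Greedily pairing terms with equal reduction splits a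
sequence into pairs and at most four leftover terms; each pair sums to the double of an element of
`(ℤ/m)²`, its "half", and a zero-sum subsequence of `k` halves lifts to a zero-sum subsequence of
`2k` terms. This gives Kemnitz's bound `s = 4n - 3` for `n = 2^j` by induction.

For the zero-sum constant, call a sequence of length `4n - 4` without zero-sum subsequence of
length `n` extremal. Halving shows inductively that in an extremal sequence every element is a sum
of `n - 1` terms; one level up, an extremal sequence then contains a zero-sum subsequence of length
`3n - 2`, obtained from the halves of its pairs and its four leftover terms, which then have
pairwise distinct reductions and hence a sum in the kernel. Now if a zero-sum sequence of length
`4n - 4` (`n = 2m ≥ 4`) had no zero-sum subsequence of length `n`, its halves would be extremal in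
`(ℤ/m)²`; dropping a zero-sum `(3m - 2)`-subsequence of halves leaves `m - 2` pairs which, with the
four leftover terms, form a zero-sum subsequence of length `n`.

The lower bounds come from `n - 1` copies each of `0, e₁, e₂, e₁ + e₂`, and from the translate
by `(τ, τ)`, `5τ = -3`, of this sequence with one copy of `e₁ + e₂` dropped: translation does not
change sums of `n` terms, and this choice of `τ` makes the whole sequence zero-sum.
-/

namespace Multiset

variable {α β G : Type*}

theorem exists_le_map_eq {f : α → β} {S : Multiset α} {U : Multiset β} (h : U ≤ S.map f) :
    ∃ T ≤ S, T.map f = U := by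
  induction S using Quotient.inductionOn with | h l => ?_
  induction U using Quotient.inductionOn with | h u => ?_
  obtain ⟨u', hu', hsub⟩ := (coe_le.mp h : u.Subperm (l.map f))
  obtain ⟨l', hl', rfl⟩ := List.sublist_map_iff.mp hsub
  exact ⟨l', coe_le.mpr hl'.subperm, coe_eq_coe.mpr hu'⟩

theorem Nodup.card_le_fintypeCard [Fintype α] {s : Multiset α} (h : s.Nodup) :
    card s ≤ Fintype.card α :=
  Finset.card_le_univ ⟨s, h⟩

theorem Nodup.eq_univ_val [Fintype α] {s : Multiset α} (h : s.Nodup)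
    (hs : card s = Fintype.card α) : s = (Finset.univ : Finset α).val :=
  congrArg Finset.val (Finset.eq_univ_of_card ⟨s, h⟩ hs)

def HasSubsum [AddCommMonoid G] (S : Multiset G) (k : ℕ) (t : G) : Prop :=
  ∃ T ≤ S, card T = k ∧ T.sum = t

section HasSubsum

variable [AddCommMonoid G] {S S' : Multiset G} {k k' : ℕ} {t t' : G}

theorem hasSubsum_card_sum (S : Multiset G) : S.HasSubsum (card S) S.sum :=
  ⟨S, le_rfl, rfl, rfl⟩

theorem hasSubsum_zero_zero (S : Multiset G) : S.HasSubsum 0 0 :=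
  ⟨0, zero_le S, rfl, rfl⟩

theorem HasSubsum.mono (h : S.HasSubsum k t) (hS : S ≤ S') : S'.HasSubsum k t :=
  let ⟨T, hT, hk, ht⟩ := h
  ⟨T, hT.trans hS, hk, ht⟩

theorem HasSubsum.add (h : S.HasSubsum k t) (h' : S'.HasSubsum k' t') :
    (S + S').HasSubsum (k + k') (t + t') :=
  let ⟨T, hT, hk, ht⟩ := h
  let ⟨T', hT', hk', ht'⟩ := h'
  ⟨T + T', add_le_add hT hT', by rw [card_add, hk, hk'], by rw [sum_add, ht, ht']⟩

theorem HasSubsum.cons_of_mem [DecidableEq G] {x : G} (hx : x ∈ S)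
    (h : (S.erase x).HasSubsum k t) : S.HasSubsum (k + 1) (x + t) := by
  simpa [add_comm k, cons_erase hx] using
    ((hasSubsum_card_sum {x}).add h : ({x} + S.erase x).HasSubsum _ _)

end HasSubsum

theorem HasSubsum.compl [AddCommGroup G] {S : Multiset G} {k : ℕ} {t : G}
    (h : S.HasSubsum k t) : S.HasSubsum (card S - k) (S.sum - t) := by
  classical
  obtain ⟨T, hT, rfl, rfl⟩ := h
  refine ⟨S - T, tsub_le_self, card_sub hT, ?_⟩
  rw [eq_sub_iff_add_eq, ← sum_add, tsub_add_cancel_of_le hT]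

def flattenPairs (P : Multiset (α × α)) : Multiset α :=
  P.map Prod.fst + P.map Prod.snd

@[simp]
theorem card_flattenPairs (P : Multiset (α × α)) : card (flattenPairs P) = 2 * card P := by
  simp [flattenPairs, two_mul]

theorem sum_flattenPairs [AddCommMonoid G] (P : Multiset (G × G)) :
    (flattenPairs P).sum = (P.map fun z => z.1 + z.2).sum := by
  rw [flattenPairs, sum_add, sum_map_add]

theorem flattenPairs_mono {P Q : Multiset (α × α)} (h : Q ≤ P) :
    flattenPairs Q ≤ flattenPairs P :=
  add_le_add (map_le_map h) (map_le_map h)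

theorem flattenPairs_cons (z : α × α) (P : Multiset (α × α)) :
    flattenPairs (z ::ₘ P) = z.1 ::ₘ z.2 ::ₘ flattenPairs P := by
  simp [flattenPairs, add_cons, cons_swap]

theorem exists_flattenPairs_add_eq [DecidableEq α] (f : α → β) (S : Multiset α) :
    ∃ (P : Multiset (α × α)) (R : Multiset α),
      flattenPairs P + R = S ∧ (∀ z ∈ P, f z.1 = f z.2) ∧ (R.map f).Nodup := by
  induction S using strongInductionOn with | ih S ih => ?_
  by_cases hS : (S.map f).Nodup
  · exact ⟨0, S, by simp [flattenPairs], by simp, hS⟩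
  obtain ⟨b, t, hbt⟩ : ∃ b t, S.map f = b ::ₘ b ::ₘ t := by
    simpa [nodup_iff_ne_cons_cons] using hS
  obtain ⟨x, hx, hfx, hxt⟩ := (map_eq_cons f S _ b).mpr hbt
  obtain ⟨y, hy, hfy, -⟩ := (map_eq_cons f _ _ b).mpr hxt
  obtain ⟨P, R, hPR, hP, hR⟩ := ih _ ((erase_le y _).trans_lt (erase_lt.mpr hx))
  refine ⟨(x, y) ::ₘ P, R, ?_, ?_, hR⟩
  · rw [flattenPairs_cons, cons_add, cons_add, hPR, cons_erase hy, cons_erase hx]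
  · simpa [forall_mem_cons, hfx, hfy] using hP

theorem card_flattenPairs_add {P : Multiset (α × α)} {R S : Multiset α}
    (h : flattenPairs P + R = S) : 2 * card P + card R = card S := by
  rw [← h, card_add, card_flattenPairs]

end Multiset

open Multiset

def KemnitzBound (G : Type*) [AddCommMonoid G] (n : ℕ) : Prop :=
  ∀ S : Multiset G, 4 * n - 3 ≤ card S → S.HasSubsum n 0

def ExtremalSubsumsCover (G : Type*) [AddCommMonoid G] (n : ℕ) : Prop :=
  ∀ H : Multiset G, card H = 4 * n - 4 → ¬ H.HasSubsum n 0 → ∀ t, H.HasSubsum (n - 1) t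

def ExtremalHasLongZeroSum (G : Type*) [AddCommMonoid G] (n : ℕ) : Prop :=
  ∀ H : Multiset G, card H = 4 * n - 4 → ¬ H.HasSubsum n 0 → H.HasSubsum (3 * n - 2) 0

theorem kemnitzBound_one (G : Type*) [AddCommMonoid G] [Subsingleton G] : KemnitzBound G 1 := by
  intro S hS
  obtain ⟨x, hx⟩ := card_pos_iff_exists_mem.mp (by omega : 0 < card S)
  exact ⟨{x}, singleton_le.mpr hx, rfl, Subsingleton.elim _ _⟩

theorem extremalSubsumsCover_one (G : Type*) [AddCommMonoid G] [Subsingleton G] :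
    ExtremalSubsumsCover G 1 := fun H _ _ t =>
  Subsingleton.elim (0 : G) t ▸ hasSubsum_zero_zero H

section Halving

/- In the application `φ : (ℤ/m)² → (ℤ/2m)²` is doubling and `π` is reduction mod 2. -/
variable {K G : Type*} [AddCommGroup K] [AddCommGroup G] {φ : K →+ G} {π : G →+ ZMod 2 × ZMod 2}

noncomputable def halfSum (φ : K →+ G) (z : G × G) : K :=
  Function.invFun φ (z.1 + z.2)

theorem map_halfSum (hφπ : π.ker ≤ φ.range) {z : G × G} (hz : π z.1 = π z.2) :
    φ (halfSum φ z) = z.1 + z.2 := by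
  refine Function.invFun_eq (hφπ ?_)
  rw [AddMonoidHom.mem_ker, _root_.map_add, hz]
  exact (by decide : ∀ q : ZMod 2 × ZMod 2, q + q = 0) _

theorem card_le_four_of_nodup_map {R : Multiset G} (hR : (R.map π).Nodup) : card R ≤ 4 := by
  simpa using hR.card_le_fintypeCard

theorem exists_mem_map_eq_of_nodup_map {R : Multiset G} (hR : (R.map π).Nodup)
    (hcard : card R = 4) (q : ZMod 2 × ZMod 2) : ∃ x ∈ R, π x = q := by
  have := hR.eq_univ_val (by rw [card_map, hcard]; rfl)
  exact mem_map.mp (this ▸ Finset.mem_univ_val q)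

theorem map_sum_eq_zero_of_nodup_map {R : Multiset G} (hR : (R.map π).Nodup)
    (hcard : card R = 4) : π R.sum = 0 := by
  rw [map_multiset_sum, hR.eq_univ_val (by rw [card_map, hcard]; rfl)]
  decide

theorem Multiset.HasSubsum.of_map_halfSum (hφπ : π.ker ≤ φ.range) {P : Multiset (G × G)}
    (hP : ∀ z ∈ P, π z.1 = π z.2) {k : ℕ} {t : K} (h : (P.map (halfSum φ)).HasSubsum k t) :
    (flattenPairs P).HasSubsum (2 * k) (φ t) := by
  obtain ⟨U, hU, rfl, rfl⟩ := h
  obtain ⟨Q, hQ, rfl⟩ := exists_le_map_eq hU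
  refine ⟨flattenPairs Q, flattenPairs_mono hQ, by simp, ?_⟩
  rw [sum_flattenPairs, map_multiset_sum, map_map]
  exact congrArg sum (map_congr rfl fun z hz => (map_halfSum hφπ (hP z (mem_of_le hQ hz))).symm)

theorem not_hasSubsum_map_halfSum (hφπ : π.ker ≤ φ.range) {H : Multiset G} {k : ℕ}
    (hH : ¬ H.HasSubsum (2 * k) 0) {P : Multiset (G × G)} (hP : ∀ z ∈ P, π z.1 = π z.2)
    (hPH : flattenPairs P ≤ H) : ¬ (P.map (halfSum φ)).HasSubsum k 0 := fun h =>
  hH (by simpa using (h.of_map_halfSum hφπ hP).mono hPH)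

theorem KemnitzBound.of_halving (hφπ : π.ker ≤ φ.range) {k : ℕ} (hk : 1 ≤ k)
    (hK : KemnitzBound K k) : KemnitzBound G (2 * k) := by
  classical
  intro S hS
  obtain ⟨P, R, hPR, hP, hR⟩ := exists_flattenPairs_add_eq π S
  have := card_le_four_of_nodup_map hR
  have := card_flattenPairs_add hPR
  have hhalf : (P.map (halfSum φ)).HasSubsum k 0 := hK _ (by rw [card_map]; omega)
  simpa [← hPR] using (hhalf.of_map_halfSum hφπ hP).mono (le_add_right _ R)

theorem card_pairs_eq_of_not_hasSubsum (hφπ : π.ker ≤ φ.range) {k : ℕ} (hk : 1 ≤ k)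
    (hK : KemnitzBound K k) {H : Multiset G} (hH : ¬ H.HasSubsum (2 * k) 0)
    (hcard : 8 * k - 5 ≤ card H) {P : Multiset (G × G)} {R : Multiset G}
    (hPR : flattenPairs P + R = H) (hP : ∀ z ∈ P, π z.1 = π z.2) (hR : (R.map π).Nodup) :
    card P = 4 * k - 4 := by
  have hP_lt : card P < 4 * k - 3 := by
    by_contra! hP_ge
    exact not_hasSubsum_map_halfSum hφπ hH hP (hPR ▸ le_add_right _ _)
      (hK _ (by simpa using hP_ge))
  have := card_le_four_of_nodup_map hR
  have := card_flattenPairs_add hPR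
  omega

theorem ExtremalSubsumsCover.of_halving (hφπ : π.ker ≤ φ.range) {k : ℕ} (hk : 1 ≤ k)
    (hK : KemnitzBound K k) (ih : ExtremalSubsumsCover K k) :
    ExtremalSubsumsCover G (2 * k) := by
  classical
  intro H hcard hH t
  obtain ⟨P, R, hPR, hP, hR⟩ := exists_flattenPairs_add_eq π H
  have hPcard := card_pairs_eq_of_not_hasSubsum hφπ hk hK hH (by omega) hPR hP hR
  obtain ⟨x, hxR, hxt⟩ := exists_mem_map_eq_of_nodup_map hR
    (by have := card_flattenPairs_add hPR; omega) (π t)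
  have hxH : x ∈ H := mem_of_le (hPR ▸ le_add_left _ _) hxR
  have hH' : ¬ (H.erase x).HasSubsum (2 * k) 0 := fun h => hH (h.mono (erase_le x H))
  obtain ⟨P', R', hPR', hP', hR'⟩ := exists_flattenPairs_add_eq π (H.erase x)
  have hP'card := card_pairs_eq_of_not_hasSubsum hφπ hk hK hH'
    (by rw [card_erase_of_mem hxH, Nat.pred_eq_sub_one]; omega) hPR' hP' hR'
  obtain ⟨r, hr⟩ := hφπ (show t - x ∈ π.ker by simp [hxt])
  have hhalf := ih (P'.map (halfSum φ)) (by rw [card_map, hP'card])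
    (not_hasSubsum_map_halfSum hφπ hH' hP' (hPR' ▸ le_add_right _ _)) r
  have := ((hhalf.of_map_halfSum hφπ hP').mono (hPR' ▸ le_add_right _ _)).cons_of_mem hxH
  rwa [hr, add_sub_cancel, show 2 * (k - 1) + 1 = 2 * k - 1 by omega] at this

theorem ExtremalHasLongZeroSum.of_halving (hφπ : π.ker ≤ φ.range) {k : ℕ} (hk : 1 ≤ k)
    (hK : KemnitzBound K k) (ih : ExtremalSubsumsCover K k) :
    ExtremalHasLongZeroSum G (2 * k) := by
  classical
  intro H hcard hH
  obtain ⟨P, R, hPR, hP, hR⟩ := exists_flattenPairs_add_eq π H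
  have hPcard := card_pairs_eq_of_not_hasSubsum hφπ hk hK hH (by omega) hPR hP hR
  have hRcard : card R = 4 := by have := card_flattenPairs_add hPR; omega
  obtain ⟨r, hr⟩ := hφπ (map_sum_eq_zero_of_nodup_map hR hRcard)
  set H' := P.map (halfSum φ)
  have hH'card : card H' = 4 * k - 4 := by rw [card_map, hPcard]
  have hcover := ih H' hH'card (not_hasSubsum_map_halfSum hφπ hH hP (hPR ▸ le_add_right _ _))
  have hrest : (flattenPairs P).HasSubsum (2 * (3 * k - 3)) (-R.sum) := by
    simpa [hH'card, ← hr, show 4 * k - 4 - (k - 1) = 3 * k - 3 by omega] using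
      ((hcover (H'.sum + r)).compl).of_map_halfSum hφπ hP
  simpa [hPR, hRcard, show 2 * (3 * k - 3) + 4 = 3 * (2 * k) - 2 by omega] using
    hrest.add (hasSubsum_card_sum R)

theorem hasSubsum_of_sum_eq_zero_of_halving (hφπ : π.ker ≤ φ.range) {k : ℕ} (hk : 2 ≤ k)
    (hK : KemnitzBound K k) (hK' : ExtremalHasLongZeroSum K k) {S : Multiset G}
    (hS : S.sum = 0) (hcard : 4 * (2 * k) - 4 ≤ card S) : S.HasSubsum (2 * k) 0 := by
  classical
  by_contra hno
  have hcard : card S = 8 * k - 4 := by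
    by_contra hne
    exact hno (hK.of_halving hφπ (by omega) S (by omega))
  obtain ⟨P, R, hPR, hP, hR⟩ := exists_flattenPairs_add_eq π S
  have hPcard := card_pairs_eq_of_not_hasSubsum hφπ (by omega) hK hno (by omega) hPR hP hR
  have hRcard : card R = 4 := by have := card_flattenPairs_add hPR; omega
  set H' := P.map (halfSum φ)
  have hH'card : card H' = 4 * k - 4 := by rw [card_map, hPcard]
  have hlong := hK' H' hH'card (not_hasSubsum_map_halfSum hφπ hno hP (hPR ▸ le_add_right _ _))
  have hsumP : φ H'.sum = -R.sum := by
    rw [map_multiset_sum, map_map, eq_neg_iff_add_eq_zero, ← hS, ← hPR, sum_add, sum_flattenPairs]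
    exact congrArg (sum · + R.sum) (map_congr rfl fun z hz => map_halfSum hφπ (hP z hz))
  have hrest : (flattenPairs P).HasSubsum (2 * (k - 2)) (-R.sum) := by
    simpa [hH'card, hsumP, show 4 * k - 4 - (3 * k - 2) = k - 2 by omega] using
      hlong.compl.of_map_halfSum hφπ hP
  apply hno
  simpa [hPR, hRcard, show 2 * (k - 2) + 4 = 2 * k by omega] using
    hrest.add (hasSubsum_card_sum R)

end Halving

theorem exists_halving_zmod_prod (m : ℕ) :
    ∃ (φ : ZMod m × ZMod m →+ ZMod (2 * m) × ZMod (2 * m))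
      (π : ZMod (2 * m) × ZMod (2 * m) →+ ZMod 2 × ZMod 2), π.ker ≤ φ.range := by
  let double : ℤ →+ ZMod (2 * m) := (AddMonoidHom.mulLeft 2).comp (Int.castAddHom _)
  have hdouble : double m = 0 := by
    change (2 : ZMod (2 * m)) * ((m : ℤ) : ZMod (2 * m)) = 0
    exact_mod_cast ZMod.natCast_self (2 * m)
  let φ₁ := ZMod.lift m ⟨double, hdouble⟩
  let π₁ := (ZMod.castHom (dvd_mul_right 2 m) (ZMod 2)).toAddMonoidHom
  have h₁ : π₁.ker ≤ φ₁.range := by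
    intro g hg
    obtain ⟨a, rfl⟩ := ZMod.intCast_surjective g
    obtain ⟨c, rfl⟩ : (2 : ℤ) ∣ a := by
      simpa [π₁, ZMod.intCast_zmod_eq_zero_iff_dvd] using hg
    exact ⟨c, by simp [φ₁, double]⟩
  refine ⟨φ₁.prodMap φ₁, π₁.prodMap π₁, ?_⟩
  rw [AddMonoidHom.ker_prodMap, AddMonoidHom.range_prodMap]
  exact AddSubgroup.prod_mono h₁ h₁

theorem kemnitzBound_two_pow (j : ℕ) : KemnitzBound (ZMod (2 ^ j) × ZMod (2 ^ j)) (2 ^ j) := by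
  induction j with
  | zero => rw [pow_zero]; exact kemnitzBound_one _
  | succ j ih =>
    obtain ⟨φ, π, hφπ⟩ := exists_halving_zmod_prod (2 ^ j)
    rw [pow_succ']
    exact ih.of_halving hφπ Nat.one_le_two_pow

theorem extremalSubsumsCover_two_pow (j : ℕ) :
    ExtremalSubsumsCover (ZMod (2 ^ j) × ZMod (2 ^ j)) (2 ^ j) := by
  induction j with
  | zero => rw [pow_zero]; exact extremalSubsumsCover_one _
  | succ j ih =>
    obtain ⟨φ, π, hφπ⟩ := exists_halving_zmod_prod (2 ^ j)
    rw [pow_succ']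
    exact ih.of_halving hφπ Nat.one_le_two_pow (kemnitzBound_two_pow j)

theorem extremalHasLongZeroSum_two_pow (j : ℕ) :
    ExtremalHasLongZeroSum (ZMod (2 ^ (j + 1)) × ZMod (2 ^ (j + 1))) (2 ^ (j + 1)) := by
  obtain ⟨φ, π, hφπ⟩ := exists_halving_zmod_prod (2 ^ j)
  rw [pow_succ']
  exact .of_halving hφπ Nat.one_le_two_pow (kemnitzBound_two_pow j)
    (extremalSubsumsCover_two_pow j)

theorem hasSubsum_of_sum_eq_zero_two_pow (j : ℕ)
    {S : Multiset (ZMod (2 ^ (j + 2)) × ZMod (2 ^ (j + 2)))} (hS : S.sum = 0)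
    (hcard : 4 * 2 ^ (j + 2) - 4 ≤ card S) : S.HasSubsum (2 ^ (j + 2)) 0 := by
  obtain ⟨φ, π, hφπ⟩ := exists_halving_zmod_prod (2 ^ (j + 1))
  revert S
  rw [pow_succ']
  exact fun hS hcard => hasSubsum_of_sum_eq_zero_of_halving hφπ (Nat.le_self_pow (by omega) 2)
    (kemnitzBound_two_pow _) (extremalHasLongZeroSum_two_pow _) hS hcard

theorem Nat.eq_zero_or_eq_of_dvd_of_lt_two_mul {n x : ℕ} (h : n ∣ x) (hx : x < 2 * n) :
    x = 0 ∨ x = n := by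
  obtain ⟨q, rfl⟩ := h
  have : q < 2 := by nlinarith
  interval_cases q <;> simp

theorem Nat.not_dvd_add_and_dvd_add {n a b c d : ℕ} (hn : 0 < n) (ha : a ≤ n - 1)
    (hb : b ≤ n - 1) (hc : c ≤ n - 1) (hd : d ≤ n - 1) (hsum : a + b + c + d = n) :
    ¬ (n ∣ b + d ∧ n ∣ c + d) := by
  rintro ⟨hbd, hcd⟩
  rcases Nat.eq_zero_or_eq_of_dvd_of_lt_two_mul hbd (by omega) with hbd | hbd <;>
  rcases Nat.eq_zero_or_eq_of_dvd_of_lt_two_mul hcd (by omega) with hcd | hcd <;> omega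

section LowerBounds

variable {n : ℕ}

def corner (τ : ZMod n) (b : Bool × Bool) : ZMod n × ZMod n :=
  (τ + b.1.toNat, τ + b.2.toNat)

theorem sum_map_corner_ne_zero [NeZero n] (τ : ZMod n) {T : Multiset (Bool × Bool)}
    (hT : ∀ b, count b T ≤ n - 1) (hcard : card T = n) : (T.map (corner τ)).sum ≠ 0 := by
  have hsum : (T.map (corner τ)).sum = ∑ b, count b T • corner τ b := by
    rw [Finset.sum_multiset_map_count]
    exact Finset.sum_subset (Finset.subset_univ _) fun b _ hb => by simp_all
  have hcount : ∑ b, count b T = n := by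
    rw [← hcard, ← toFinset_sum_count_eq]
    exact (Finset.sum_subset (Finset.subset_univ _) fun b _ hb => by simp_all).symm
  simp only [Fintype.sum_prod_type, Fintype.sum_bool] at hsum hcount
  intro h0
  refine Nat.not_dvd_add_and_dvd_add (NeZero.pos n) (hT (false, false)) (hT (true, false))
    (hT (false, true)) (hT (true, true)) (by omega) ?_
  generalize count (false, false) T = a, count (true, false) T = b,
    count (false, true) T = c, count (true, true) T = d at *
  have hn : (a + b + c + d : ZMod n) = 0 := by
    exact_mod_cast (congrArg (Nat.cast : ℕ → ZMod n) (show a + b + c + d = n by omega)).trans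
      (ZMod.natCast_self n)
  have hcoord := hsum.symm.trans h0
  simp only [corner, Bool.toNat_true, Bool.toNat_false, Nat.cast_one, Nat.cast_zero, add_zero,
    Prod.smul_mk, nsmul_eq_mul, mul_add, mul_one, Prod.mk_add_mk, Prod.ext_iff, Prod.fst_zero,
    Prod.snd_zero] at hcoord
  simp only [← ZMod.natCast_eq_zero_iff, Nat.cast_add]
  exact ⟨by linear_combination hcoord.1 - τ * hn, by linear_combination hcoord.2 - τ * hn⟩

theorem not_hasSubsum_map_corner [NeZero n] (τ : ZMod n) {S : Multiset (Bool × Bool)}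
    (hS : S ≤ (n - 1) • (Finset.univ : Finset (Bool × Bool)).val) :
    ¬ (S.map (corner τ)).HasSubsum n 0 := by
  rintro ⟨T, hT, hcard, hsum⟩
  obtain ⟨T, hTS, rfl⟩ := exists_le_map_eq hT
  refine sum_map_corner_ne_zero τ (fun b => ?_) (by rwa [card_map] at hcard) hsum
  simpa using le_iff_count.mp (hTS.trans hS) b

theorem exists_card_eq_not_hasSubsum [NeZero n] :
    ∃ S : Multiset (ZMod n × ZMod n), card S = 4 * n - 4 ∧ ¬ S.HasSubsum n 0 :=
  ⟨_, by simp only [card_map, card_nsmul, Finset.card_val, Finset.card_univ, Fintype.card_prod,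
    Fintype.card_bool]; omega, not_hasSubsum_map_corner 0 le_rfl⟩

theorem exists_sum_eq_zero_not_hasSubsum (hn : 2 ≤ n) (hn5 : Nat.Coprime 5 n) :
    ∃ S : Multiset (ZMod n × ZMod n),
      card S = 4 * n - 5 ∧ S.sum = 0 ∧ ¬ S.HasSubsum n 0 := by
  have : NeZero n := ⟨by omega⟩
  set τ : ZMod n := -3 * ((5 : ℕ) : ZMod n)⁻¹
  have hτ : 5 * τ = -3 := by
    have h5 := ZMod.coe_mul_inv_eq_one 5 hn5
    push_cast at h5
    linear_combination -3 * h5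
  set S₀ := (n - 1) • (Finset.univ : Finset (Bool × Bool)).val
  have hmem : (true, true) ∈ S₀ := mem_nsmul.mpr ⟨by omega, Finset.mem_univ_val _⟩
  refine ⟨(S₀.erase (true, true)).map (corner τ), ?_, ?_,
    not_hasSubsum_map_corner τ (erase_le _ _)⟩
  · rw [card_map, card_erase_of_mem hmem]
    simp only [S₀, card_nsmul, Finset.card_val, Finset.card_univ, Fintype.card_prod,
      Fintype.card_bool, Nat.pred_eq_sub_one]
    omega
  · have hS₀ := sum_map_erase (f := corner τ) hmem
    rw [Multiset.map_nsmul, sum_nsmul, ← Finset.sum_eq_multiset_sum] at hS₀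
    have hm1 : ((n - 1 : ℕ) : ZMod n) = -1 := by
      rw [Nat.cast_sub (by omega), ZMod.natCast_self, Nat.cast_one, zero_sub]
    rw [eq_sub_of_add_eq' hS₀]
    simp only [Fintype.sum_prod_type, Fintype.sum_bool, corner, Bool.toNat_true, Bool.toNat_false,
      Nat.cast_one, Nat.cast_zero, add_zero, Prod.smul_mk, nsmul_eq_mul, hm1, Prod.mk_add_mk,
      Prod.mk_sub_mk, Prod.ext_iff, Prod.fst_zero, Prod.snd_zero]
    constructor <;> linear_combination -hτ

end LowerBounds

theorem zhong_remark_ii (h : ℕ) (hh : 2 ≤ h)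
    (sG s'G : ℕ)
    (hs : IsLeast {ℓ : ℕ | ∀ S : Multiset (ZMod (2 ^ h) × ZMod (2 ^ h)),
      ℓ ≤ S.card → ∃ T : Multiset (ZMod (2 ^ h) × ZMod (2 ^ h)),
        T ≤ S ∧ T.card = 2 ^ h ∧ T.sum = 0} sG)
    (hs' : IsLeast {ℓ : ℕ | ∀ S : Multiset (ZMod (2 ^ h) × ZMod (2 ^ h)),
      S.sum = 0 → ℓ ≤ S.card → ∃ T : Multiset (ZMod (2 ^ h) × ZMod (2 ^ h)),
        T ≤ S ∧ T.card = 2 ^ h ∧ T.sum = 0} s'G) :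
    s'G = sG - 1 ∧ s'G = 4 * 2 ^ h - 4 := by
  obtain ⟨j, rfl⟩ : ∃ j, h = j + 2 := ⟨h - 2, by omega⟩
  have hn : 4 ≤ 2 ^ (j + 2) := by
    simpa using Nat.pow_le_pow_right two_pos (Nat.le_add_left 2 j)
  have hsG : sG = 4 * 2 ^ (j + 2) - 3 := by
    refine hs.unique ⟨kemnitzBound_two_pow _, fun ℓ hℓ => ?_⟩
    obtain ⟨S, hcard, hS⟩ := exists_card_eq_not_hasSubsum (n := 2 ^ (j + 2))
    by_contra! hlt
    exact hS (hℓ S (by omega))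
  have hs'G : s'G = 4 * 2 ^ (j + 2) - 4 := by
    refine hs'.unique ⟨fun S => hasSubsum_of_sum_eq_zero_two_pow j, fun ℓ hℓ => ?_⟩
    obtain ⟨S, hcard, hsum, hS⟩ :=
      exists_sum_eq_zero_not_hasSubsum (n := 2 ^ (j + 2)) (by omega) (.pow_right _ (by norm_num))
    by_contra! hlt
    exact hS (hℓ S hsum (by omega))
  omega
end
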